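/- arXiv:math/0510679 — 11 statements merged into one kernel-verified Lean document; each statement's English description precedes it below -/
import Mathlib

section
/- Let v1=(1,0,0), v2=(0,1,0), v3=(0,0,1), v4=(0,-1,-1), v5=(-1,0,-1), v6=(-2,-1,0), v7=(-1,-1,-1), v8=(-2,-1,-1) in ℝ³, and consider the 12 cones ⟨v1,v2,v3⟩, ⟨v1,v2,v4⟩, ⟨v2,v4,v5⟩, ⟨v2,v3,v5⟩, ⟨v3,v5,v6⟩, ⟨v1,v3,v6⟩, ⟨v1,v4,v6⟩, ⟨v4,v5,v7⟩, ⟨v4,v6,v7⟩, ⟨v5,v6,v8⟩, ⟨v5,v7,v8⟩, ⟨v6,v7,v8⟩. If Ψ : ℝ³ → ℝ is a convex function such that for each of these 12 cones there exists a linear functional ℓ : ℝ³ → ℝ with Ψ(x) = ℓ(x) for all x in that cone, then there exists a single linear functional ℓ : ℝ³ → ℝ with Ψ(x) = ℓ(x) for all x ∈ ℝ³. -/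
def cone3 (u v w : Fin 3 → ℝ) : Set (Fin 3 → ℝ) :=
  {x | ∃ α β γ : ℝ, 0 ≤ α ∧ 0 ≤ β ∧ 0 ≤ γ ∧ x = α • u + β • v + γ • w}

/-!
Write `vᵢ` for the rays and `ψᵢ = Ψ vᵢ`. A convex function that is linear on a full-dimensional
cone lies above the linear extension of its restriction. Applied to the cone `⟨v₁,v₂,v₃⟩` this
gives `ψ₄ ≥ -ψ₂ - ψ₃`, `ψ₅ ≥ -ψ₁ - ψ₃`, `ψ₆ ≥ -2ψ₁ - ψ₂`; applied to `⟨v₂,v₄,v₅⟩`, `⟨v₃,v₅,v₆⟩`,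
`⟨v₁,v₄,v₆⟩` at the rays `v₁ = v₂ + v₄ - v₅`, `v₂ = 2v₃ + 2v₅ - v₆`, `v₃ = 2v₁ - v₄ + v₆` it
gives three more inequalities, and together they force equality. Hence `Ψ` is linear on each
coordinate axis (`-e₁ = v₃ + v₅`, `-e₂ = 2v₁ + v₆`, `-e₃ = v₂ + v₄`), so by Jensen's inequality
for `x = ∑ (1/3) (3 xᵢ eᵢ)` it lies below the linear map `ℓ` agreeing with it on the positive
orthant, and above `ℓ` by the first remark.
-/

def IsLinearOn {E : Type*} [AddCommGroup E] [Module ℝ E] (f : E → ℝ) (s : Set E) : Prop :=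
  ∃ ℓ : E →ₗ[ℝ] ℝ, ∀ x ∈ s, f x = ℓ x

section General

variable {E : Type*} [AddCommGroup E] [Module ℝ E] {f : E → ℝ}

theorem convexOn_univ_of_forall
    (h : ∀ x y : E, ∀ t : ℝ, 0 ≤ t → t ≤ 1 → f (t • x + (1 - t) • y) ≤ t * f x + (1 - t) * f y) :
    ConvexOn ℝ Set.univ f := by
  refine ⟨convex_univ, fun x _ y _ a b ha hb hab => ?_⟩
  obtain rfl : b = 1 - a := by linarith
  simpa only [smul_eq_mul] using h x y a ha (by linarith)

theorem IsLinearOn.map_smul {s : Set E} (h : IsLinearOn f s) {x : E} {t : ℝ} (hx : x ∈ s)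
    (htx : t • x ∈ s) : f (t • x) = t * f x := by
  obtain ⟨ℓ, hℓ⟩ := h
  rw [hℓ _ htx, hℓ _ hx, LinearMap.map_smul, smul_eq_mul]

theorem ConvexOn.linearMap_le_of_eq (hf : ConvexOn ℝ Set.univ f) (ℓ : E →ₗ[ℝ] ℝ) {p x : E}
    {t : ℝ} (ht₀ : 0 < t) (ht₁ : t ≤ 1) (hp : f p = ℓ p)
    (hq : f ((1 - t) • p + t • x) = ℓ ((1 - t) • p + t • x)) : ℓ x ≤ f x := by
  have hconv := hf.2 (Set.mem_univ p) (Set.mem_univ x) (show 0 ≤ 1 - t by linarith) ht₀.le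
    (sub_add_cancel 1 t)
  simp only [hq, map_add, map_smul, hp, smul_eq_mul] at hconv
  exact le_of_mul_le_mul_left (by linarith) ht₀

theorem map_smul_le_of_neg_le {y : E} (hpos : ∀ t : ℝ, 0 ≤ t → f (t • y) = t * f y)
    (hneg : ∀ t : ℝ, 0 ≤ t → f (t • -y) = t * f (-y)) (hle : f (-y) ≤ -f y) (t : ℝ) :
    f (t • y) ≤ t * f y := by
  rcases le_total 0 t with ht | ht
  · exact (hpos t ht).le
  · rw [← neg_smul_neg, hneg (-t) (neg_nonneg.mpr ht)]
    nlinarith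

theorem ConvexOn.le_of_forall_smul_basis_le {ι : Type*} [Fintype ι] [Nonempty ι]
    (b : Module.Basis ι ℝ E) (hf : ConvexOn ℝ Set.univ f) (ℓ : E →ₗ[ℝ] ℝ)
    (h : ∀ i (t : ℝ), f (t • b i) ≤ t * ℓ (b i)) (x : E) : f x ≤ ℓ x := by
  set n : ℝ := (Fintype.card ι : ℝ)
  have hn : 0 < n := Nat.cast_pos.mpr Fintype.card_pos
  have hx : x = ∑ i, n⁻¹ • ((n * b.repr x i) • b i) := by
    conv_lhs => rw [← b.sum_repr x]
    refine Finset.sum_congr rfl fun i _ => ?_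
    rw [smul_smul, inv_mul_cancel_left₀ hn.ne']
  calc f x = f (∑ i, n⁻¹ • ((n * b.repr x i) • b i)) := congrArg f hx
    _ ≤ ∑ i, n⁻¹ • f ((n * b.repr x i) • b i) := by
        refine hf.map_sum_le (w := fun _ => n⁻¹) (fun _ _ => by positivity) ?_
          (fun _ _ => Set.mem_univ _)
        rw [Finset.sum_const, Finset.card_univ, nsmul_eq_mul, mul_inv_cancel₀ hn.ne']
    _ ≤ ∑ i, n⁻¹ • ((n * b.repr x i) * ℓ (b i)) :=
        Finset.sum_le_sum fun i _ => smul_le_smul_of_nonneg_left (h i _) (by positivity)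
    _ = ℓ x := by
        conv_rhs => rw [← b.sum_repr x]
        simp only [map_sum, map_smul, smul_eq_mul]
        refine Finset.sum_congr rfl fun i _ => ?_
        field_simp

end General

section Cone3

variable {Ψ : (Fin 3 → ℝ) → ℝ} {u v w x : Fin 3 → ℝ} {a b c : ℝ}

theorem combination_mem_cone3 (ha : 0 ≤ a) (hb : 0 ≤ b) (hc : 0 ≤ c) :
    a • u + b • v + c • w ∈ cone3 u v w :=
  ⟨a, b, c, ha, hb, hc, rfl⟩

theorem smul_mem_cone3 {t : ℝ} (ht : 0 ≤ t) (hx : x ∈ cone3 u v w) : t • x ∈ cone3 u v w := by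
  obtain ⟨a, b, c, ha, hb, hc, rfl⟩ := hx
  refine ⟨t * a, t * b, t * c, by positivity, by positivity, by positivity, ?_⟩
  simp only [smul_add, smul_smul]

theorem LinearMap.apply_combination_of_eqOn_cone3 {ℓ : (Fin 3 → ℝ) →ₗ[ℝ] ℝ}
    (hℓ : ∀ y ∈ cone3 u v w, Ψ y = ℓ y) :
    ℓ (a • u + b • v + c • w) = a * Ψ u + b * Ψ v + c * Ψ w := by
  rw [hℓ u ⟨1, 0, 0, by simp⟩, hℓ v ⟨0, 1, 0, by simp⟩, hℓ w ⟨0, 0, 1, by simp⟩]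
  simp

theorem IsLinearOn.map_combination_cone3 (h : IsLinearOn Ψ (cone3 u v w)) (ha : 0 ≤ a)
    (hb : 0 ≤ b) (hc : 0 ≤ c) : Ψ (a • u + b • v + c • w) = a * Ψ u + b * Ψ v + c * Ψ w := by
  obtain ⟨ℓ, hℓ⟩ := h
  rw [hℓ _ (combination_mem_cone3 ha hb hc), ℓ.apply_combination_of_eqOn_cone3 hℓ]

theorem exists_segment_mem_cone3 (hx : x = a • u + b • v + c • w) :
    ∃ t : ℝ, 0 < t ∧ t ≤ 1 ∧ (1 - t) • (u + v + w) + t • x ∈ cone3 u v w := by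
  set M := 1 + |a| + |b| + |c|
  have hM : 1 ≤ M := by linarith [abs_nonneg a, abs_nonneg b, abs_nonneg c]
  have hcoef (d : ℝ) (hd : |d| ≤ M - 1) : 0 ≤ (1 - M⁻¹) + M⁻¹ * d := by
    have : (1 - M⁻¹) + M⁻¹ * d = M⁻¹ * (M - 1 + d) := by field_simp
    rw [this]
    exact mul_nonneg (inv_nonneg.mpr (by linarith)) (by linarith [neg_abs_le d])
  refine ⟨M⁻¹, inv_pos.mpr (by linarith), inv_le_one_of_one_le₀ hM, _, _, _,
    hcoef a (by linarith [abs_nonneg b, abs_nonneg c]),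
    hcoef b (by linarith [abs_nonneg a, abs_nonneg c]),
    hcoef c (by linarith [abs_nonneg a, abs_nonneg b]), ?_⟩
  rw [hx]; module

theorem le_of_eqOn_cone3 (hΨ : ConvexOn ℝ Set.univ Ψ) {ℓ : (Fin 3 → ℝ) →ₗ[ℝ] ℝ}
    (hℓ : ∀ y ∈ cone3 u v w, Ψ y = ℓ y) (hx : x = a • u + b • v + c • w) : ℓ x ≤ Ψ x := by
  obtain ⟨t, ht₀, ht₁, hq⟩ := exists_segment_mem_cone3 hx
  exact hΨ.linearMap_le_of_eq ℓ ht₀ ht₁ (hℓ _ ⟨1, 1, 1, zero_le_one, zero_le_one, zero_le_one,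
    by simp⟩) (hℓ _ hq)

theorem IsLinearOn.combination_le_cone3 (hΨ : ConvexOn ℝ Set.univ Ψ)
    (h : IsLinearOn Ψ (cone3 u v w)) (hx : x = a • u + b • v + c • w) :
    a * Ψ u + b * Ψ v + c * Ψ w ≤ Ψ x := by
  obtain ⟨ℓ, hℓ⟩ := h
  rw [← ℓ.apply_combination_of_eqOn_cone3 hℓ, ← hx]
  exact le_of_eqOn_cone3 hΨ hℓ hx

theorem IsLinearOn.map_smul_le_cone3 {u' v' w' y : Fin 3 → ℝ} (h : IsLinearOn Ψ (cone3 u v w))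
    (hy : y ∈ cone3 u v w) (h' : IsLinearOn Ψ (cone3 u' v' w'))
    (hneg : -y = a • u' + b • v' + c • w') (ha : 0 ≤ a) (hb : 0 ≤ b) (hc : 0 ≤ c)
    (hle : a * Ψ u' + b * Ψ v' + c * Ψ w' ≤ -Ψ y) (t : ℝ) : Ψ (t • y) ≤ t * Ψ y := by
  have hy' : -y ∈ cone3 u' v' w' := hneg ▸ combination_mem_cone3 ha hb hc
  refine map_smul_le_of_neg_le (fun s hs => h.map_smul hy (smul_mem_cone3 hs hy))
    (fun s hs => h'.map_smul hy' (smul_mem_cone3 hs hy')) ?_ t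
  rwa [hneg, h'.map_combination_cone3 ha hb hc]

end Cone3

section Fan

variable {Ψ : (Fin 3 → ℝ) → ℝ} (hΨ : ConvexOn ℝ Set.univ Ψ)
  (h1 : IsLinearOn Ψ (cone3 ![1,0,0] ![0,1,0] ![0,0,1]))
  (h3 : IsLinearOn Ψ (cone3 ![0,1,0] ![0,-1,-1] ![-1,0,-1]))
  (h5 : IsLinearOn Ψ (cone3 ![0,0,1] ![-1,0,-1] ![-2,-1,0]))
  (h7 : IsLinearOn Ψ (cone3 ![1,0,0] ![0,-1,-1] ![-2,-1,0]))
include hΨ h1 h3 h5 h7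

theorem rays_sum_nonpos :
    Ψ ![1,0,0] + Ψ ![0,0,1] + Ψ ![-1,0,-1] ≤ 0 ∧
    2 * Ψ ![1,0,0] + Ψ ![0,1,0] + Ψ ![-2,-1,0] ≤ 0 ∧
    Ψ ![0,1,0] + Ψ ![0,0,1] + Ψ ![0,-1,-1] ≤ 0 := by
  have w₄ := h1.combination_le_cone3 hΨ (x := ![0,-1,-1]) (a := 0) (b := -1) (c := -1)
    (by ext i; fin_cases i <;> simp)
  have w₅ := h1.combination_le_cone3 hΨ (x := ![-1,0,-1]) (a := -1) (b := 0) (c := -1)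
    (by ext i; fin_cases i <;> simp)
  have w₆ := h1.combination_le_cone3 hΨ (x := ![-2,-1,0]) (a := -2) (b := -1) (c := 0)
    (by ext i; fin_cases i <;> simp)
  have w₁ := h3.combination_le_cone3 hΨ (x := ![1,0,0]) (a := 1) (b := 1) (c := -1)
    (by ext i; fin_cases i <;> simp)
  have w₂ := h5.combination_le_cone3 hΨ (x := ![0,1,0]) (a := 2) (b := 2) (c := -1)
    (by ext i; fin_cases i <;> simp)
  have w₃ := h7.combination_le_cone3 hΨ (x := ![0,0,1]) (a := 2) (b := -1) (c := 1)
    (by ext i; fin_cases i <;> simp)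
  refine ⟨?_, ?_, ?_⟩ <;> linarith

theorem smul_basisFun_le {ℓ : (Fin 3 → ℝ) →ₗ[ℝ] ℝ}
    (hℓ : ∀ x ∈ cone3 ![1,0,0] ![0,1,0] ![0,0,1], Ψ x = ℓ x) (i : Fin 3) (t : ℝ) :
    Ψ (t • Pi.basisFun ℝ (Fin 3) i) ≤ t * ℓ (Pi.basisFun ℝ (Fin 3) i) := by
  obtain ⟨hs₁, hs₂, hs₃⟩ := rays_sum_nonpos hΨ h1 h3 h5 h7
  have he : ⇑(Pi.basisFun ℝ (Fin 3)) = ![![1,0,0], ![0,1,0], ![0,0,1]] := by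
    ext i j; fin_cases i <;> fin_cases j <;> simp
  rw [he]
  fin_cases i
  · show Ψ (t • ![1,0,0]) ≤ t * ℓ ![1,0,0]
    rw [← hℓ _ ⟨1, 0, 0, by simp⟩]
    exact h1.map_smul_le_cone3 ⟨1, 0, 0, by simp⟩ h5 (a := 1) (b := 1) (c := 0)
      (by ext i; fin_cases i <;> simp) zero_le_one zero_le_one le_rfl (by linarith) t
  · show Ψ (t • ![0,1,0]) ≤ t * ℓ ![0,1,0]
    rw [← hℓ _ ⟨0, 1, 0, by simp⟩]
    exact h1.map_smul_le_cone3 ⟨0, 1, 0, by simp⟩ h7 (a := 2) (b := 0) (c := 1)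
      (by ext i; fin_cases i <;> simp) zero_le_two le_rfl zero_le_one (by linarith) t
  · show Ψ (t • ![0,0,1]) ≤ t * ℓ ![0,0,1]
    rw [← hℓ _ ⟨0, 0, 1, by simp⟩]
    exact h1.map_smul_le_cone3 ⟨0, 0, 1, by simp⟩ h3 (a := 1) (b := 1) (c := 0)
      (by ext i; fin_cases i <;> simp) zero_le_one zero_le_one le_rfl (by linarith) t

end Fan

theorem stmt0_general (Ψ : (Fin 3 → ℝ) → ℝ)
    (hconv : ∀ x y : Fin 3 → ℝ, ∀ t : ℝ, 0 ≤ t → t ≤ 1 →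
      Ψ (t • x + (1 - t) • y) ≤ t * Ψ x + (1 - t) * Ψ y)
    (h1 : ∃ ℓ : (Fin 3 → ℝ) →ₗ[ℝ] ℝ, ∀ x ∈ cone3 ![1,0,0] ![0,1,0] ![0,0,1], Ψ x = ℓ x)
    (h3 : ∃ ℓ : (Fin 3 → ℝ) →ₗ[ℝ] ℝ, ∀ x ∈ cone3 ![0,1,0] ![0,-1,-1] ![-1,0,-1], Ψ x = ℓ x)
    (h5 : ∃ ℓ : (Fin 3 → ℝ) →ₗ[ℝ] ℝ, ∀ x ∈ cone3 ![0,0,1] ![-1,0,-1] ![-2,-1,0], Ψ x = ℓ x)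
    (h7 : ∃ ℓ : (Fin 3 → ℝ) →ₗ[ℝ] ℝ, ∀ x ∈ cone3 ![1,0,0] ![0,-1,-1] ![-2,-1,0], Ψ x = ℓ x) :
    ∃ ℓ : (Fin 3 → ℝ) →ₗ[ℝ] ℝ, ∀ x : Fin 3 → ℝ, Ψ x = ℓ x := by
  have hΨ := convexOn_univ_of_forall hconv
  obtain ⟨ℓ, hℓ⟩ := id h1
  refine ⟨ℓ, fun x => le_antisymm ?_ ?_⟩
  · exact hΨ.le_of_forall_smul_basis_le _ ℓ (smul_basisFun_le hΨ h1 h3 h5 h7 hℓ) x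
  · exact le_of_eqOn_cone3 hΨ hℓ (x := x) (a := x 0) (b := x 1) (c := x 2)
      (by ext i; fin_cases i <;> simp)

theorem stmt0 (Ψ : (Fin 3 → ℝ) → ℝ)
    (hconv : ∀ x y : Fin 3 → ℝ, ∀ t : ℝ, 0 ≤ t → t ≤ 1 →
      Ψ (t • x + (1 - t) • y) ≤ t * Ψ x + (1 - t) * Ψ y)
    (h1 : ∃ ℓ : (Fin 3 → ℝ) →ₗ[ℝ] ℝ, ∀ x ∈ cone3 ![1,0,0] ![0,1,0] ![0,0,1], Ψ x = ℓ x)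
    (h2 : ∃ ℓ : (Fin 3 → ℝ) →ₗ[ℝ] ℝ, ∀ x ∈ cone3 ![1,0,0] ![0,1,0] ![0,-1,-1], Ψ x = ℓ x)
    (h3 : ∃ ℓ : (Fin 3 → ℝ) →ₗ[ℝ] ℝ, ∀ x ∈ cone3 ![0,1,0] ![0,-1,-1] ![-1,0,-1], Ψ x = ℓ x)
    (h4 : ∃ ℓ : (Fin 3 → ℝ) →ₗ[ℝ] ℝ, ∀ x ∈ cone3 ![0,1,0] ![0,0,1] ![-1,0,-1], Ψ x = ℓ x)
    (h5 : ∃ ℓ : (Fin 3 → ℝ) →ₗ[ℝ] ℝ, ∀ x ∈ cone3 ![0,0,1] ![-1,0,-1] ![-2,-1,0], Ψ x = ℓ x)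
    (h6 : ∃ ℓ : (Fin 3 → ℝ) →ₗ[ℝ] ℝ, ∀ x ∈ cone3 ![1,0,0] ![0,0,1] ![-2,-1,0], Ψ x = ℓ x)
    (h7 : ∃ ℓ : (Fin 3 → ℝ) →ₗ[ℝ] ℝ, ∀ x ∈ cone3 ![1,0,0] ![0,-1,-1] ![-2,-1,0], Ψ x = ℓ x)
    (h8 : ∃ ℓ : (Fin 3 → ℝ) →ₗ[ℝ] ℝ, ∀ x ∈ cone3 ![0,-1,-1] ![-1,0,-1] ![-1,-1,-1], Ψ x = ℓ x)
    (h9 : ∃ ℓ : (Fin 3 → ℝ) →ₗ[ℝ] ℝ, ∀ x ∈ cone3 ![0,-1,-1] ![-2,-1,0] ![-1,-1,-1], Ψ x = ℓ x)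
    (h10 : ∃ ℓ : (Fin 3 → ℝ) →ₗ[ℝ] ℝ, ∀ x ∈ cone3 ![-1,0,-1] ![-2,-1,0] ![-2,-1,-1], Ψ x = ℓ x)
    (h11 : ∃ ℓ : (Fin 3 → ℝ) →ₗ[ℝ] ℝ, ∀ x ∈ cone3 ![-1,0,-1] ![-1,-1,-1] ![-2,-1,-1], Ψ x = ℓ x)
    (h12 : ∃ ℓ : (Fin 3 → ℝ) →ₗ[ℝ] ℝ, ∀ x ∈ cone3 ![-2,-1,0] ![-1,-1,-1] ![-2,-1,-1], Ψ x = ℓ x) :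
    ∃ ℓ : (Fin 3 → ℝ) →ₗ[ℝ] ℝ, ∀ x : Fin 3 → ℝ, Ψ x = ℓ x :=
  stmt0_general Ψ hconv h1 h3 h5 h7
end

section
/- Fix an integer a with a ≠ 0 and a ≠ -1. Let v1=(1,0,0), v2=(0,1,0), v3=(0,0,1), v4=(0,-1,-a), v5=(0,0,-1), v6=(-1,1,-1), v7=(-1,0,-1), v8=(-1,-1,0) in ℝ³, and consider the 12 cones ⟨v1,v2,v3⟩, ⟨v1,v3,v4⟩, ⟨v1,v4,v5⟩, ⟨v1,v5,v6⟩, ⟨v1,v2,v6⟩, ⟨v2,v3,v8⟩, ⟨v3,v4,v8⟩, ⟨v4,v5,v8⟩, ⟨v5,v6,v7⟩, ⟨v5,v7,v8⟩, ⟨v6,v7,v8⟩, ⟨v2,v6,v8⟩. If Ψ : ℝ³ → ℝ is a convex function such that for each of these 12 cones there exists a linear functional ℓ : ℝ³ → ℝ with Ψ(x) = ℓ(x) for all x in that cone, then there exists a single linear functional ℓ : ℝ³ → ℝ with Ψ(x) = ℓ(x) for all x ∈ ℝ³. -/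
private lemma eq_on_cone {Ψ : (Fin 3 → ℝ) → ℝ} {u v w : Fin 3 → ℝ}
    {ℓ : (Fin 3 → ℝ) →ₗ[ℝ] ℝ} (h : ∀ x ∈ cone3 u v w, Ψ x = ℓ x)
    {α β γ : ℝ} (hα : 0 ≤ α) (hβ : 0 ≤ β) (hγ : 0 ≤ γ)
    {y : Fin 3 → ℝ} (hy : y = α • u + β • v + γ • w) :
    Ψ y = α * Ψ u + β * Ψ v + γ * Ψ w := by
  have hu : Ψ u = ℓ u := h u ⟨1, 0, 0, by norm_num, by norm_num, by norm_num, by module⟩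
  have hv : Ψ v = ℓ v := h v ⟨0, 1, 0, by norm_num, by norm_num, by norm_num, by module⟩
  have hw : Ψ w = ℓ w := h w ⟨0, 0, 1, by norm_num, by norm_num, by norm_num, by module⟩
  have hy' : Ψ y = ℓ y := h y ⟨α, β, γ, hα, hβ, hγ, hy⟩
  rw [hy', hy, hu, hv, hw]
  simp [smul_eq_mul]

private lemma le_on_all {Ψ : (Fin 3 → ℝ) → ℝ}
    (hconv : ∀ x y : Fin 3 → ℝ, ∀ t : ℝ, 0 ≤ t → t ≤ 1 →
      Ψ (t • x + (1 - t) • y) ≤ t * Ψ x + (1 - t) * Ψ y)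
    {u v w : Fin 3 → ℝ} {ℓ : (Fin 3 → ℝ) →ₗ[ℝ] ℝ}
    (h : ∀ x ∈ cone3 u v w, Ψ x = ℓ x)
    (α β γ : ℝ) (y : Fin 3 → ℝ) (hy : y = α • u + β • v + γ • w) :
    α * Ψ u + β * Ψ v + γ * Ψ w ≤ Ψ y := by
  set n : ℝ := 1 + |α - 1| + |β - 1| + |γ - 1| with hn
  have hn1 : 1 ≤ n := by
    have := abs_nonneg (α - 1); have := abs_nonneg (β - 1); have := abs_nonneg (γ - 1)
    simp only [hn]; linarith
  have hn0 : 0 < n := by linarith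
  set t : ℝ := 1 / n with htdef
  have ht0 : 0 < t := by positivity
  have ht1 : t ≤ 1 := by rw [htdef, div_le_one hn0]; linarith
  have habsα : 1 - α ≤ |α - 1| := by rw [abs_sub_comm]; exact le_abs_self _
  have habsβ : 1 - β ≤ |β - 1| := by rw [abs_sub_comm]; exact le_abs_self _
  have habsγ : 1 - γ ≤ |γ - 1| := by rw [abs_sub_comm]; exact le_abs_self _
  have habsα' : α - 1 ≤ |α - 1| := le_abs_self _
  have habsβ' : β - 1 ≤ |β - 1| := le_abs_self _
  have habsγ' : γ - 1 ≤ |γ - 1| := le_abs_self _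
  have htn : t * n = 1 := by rw [htdef]; field_simp
  -- coefficients of the interior point
  have coeff_nonneg : ∀ δ : ℝ, 1 - δ ≤ n - 1 → 0 ≤ t * δ + (1 - t) := by
    intro δ hδ
    have h' := mul_le_mul_of_nonneg_left hδ ht0.le
    nlinarith [ht0.le, htn]
  have hA : 0 ≤ t * α + (1 - t) := coeff_nonneg α
    (by have := abs_nonneg (β - 1); have := abs_nonneg (γ - 1); simp only [hn]; linarith)
  have hB : 0 ≤ t * β + (1 - t) := coeff_nonneg β
    (by have := abs_nonneg (α - 1); have := abs_nonneg (γ - 1); simp only [hn]; linarith)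
  have hC : 0 ≤ t * γ + (1 - t) := coeff_nonneg γ
    (by have := abs_nonneg (α - 1); have := abs_nonneg (β - 1); simp only [hn]; linarith)
  have hz : t • y + (1 - t) • (u + v + w)
      = (t * α + (1 - t)) • u + (t * β + (1 - t)) • v + (t * γ + (1 - t)) • w := by
    rw [hy]; module
  have hzval : Ψ (t • y + (1 - t) • (u + v + w))
      = (t * α + (1 - t)) * Ψ u + (t * β + (1 - t)) * Ψ v + (t * γ + (1 - t)) * Ψ w :=
    eq_on_cone h hA hB hC hz
  have hx0 : Ψ (u + v + w) = 1 * Ψ u + 1 * Ψ v + 1 * Ψ w :=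
    eq_on_cone h zero_le_one zero_le_one zero_le_one (by module)
  have hc := hconv y (u + v + w) t ht0.le ht1
  rw [hzval, hx0] at hc
  have key : t * (α * Ψ u + β * Ψ v + γ * Ψ w) ≤ t * Ψ y := by linarith [hc]
  exact le_of_mul_le_mul_left key ht0

set_option maxHeartbeats 1000000 in
theorem stmt1 (a : ℤ) (ha0 : a ≠ 0) (ha1 : a ≠ -1) (Ψ : (Fin 3 → ℝ) → ℝ)
    (hconv : ∀ x y : Fin 3 → ℝ, ∀ t : ℝ, 0 ≤ t → t ≤ 1 →
      Ψ (t • x + (1 - t) • y) ≤ t * Ψ x + (1 - t) * Ψ y)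
    (h1 : ∃ ℓ : (Fin 3 → ℝ) →ₗ[ℝ] ℝ, ∀ x ∈ cone3 ![1,0,0] ![0,1,0] ![0,0,1], Ψ x = ℓ x)
    (h2 : ∃ ℓ : (Fin 3 → ℝ) →ₗ[ℝ] ℝ, ∀ x ∈ cone3 ![1,0,0] ![0,0,1] ![0,-1,-(a:ℝ)], Ψ x = ℓ x)
    (h3 : ∃ ℓ : (Fin 3 → ℝ) →ₗ[ℝ] ℝ, ∀ x ∈ cone3 ![1,0,0] ![0,-1,-(a:ℝ)] ![0,0,-1], Ψ x = ℓ x)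
    (h4 : ∃ ℓ : (Fin 3 → ℝ) →ₗ[ℝ] ℝ, ∀ x ∈ cone3 ![1,0,0] ![0,0,-1] ![-1,1,-1], Ψ x = ℓ x)
    (h5 : ∃ ℓ : (Fin 3 → ℝ) →ₗ[ℝ] ℝ, ∀ x ∈ cone3 ![1,0,0] ![0,1,0] ![-1,1,-1], Ψ x = ℓ x)
    (h6 : ∃ ℓ : (Fin 3 → ℝ) →ₗ[ℝ] ℝ, ∀ x ∈ cone3 ![0,1,0] ![0,0,1] ![-1,-1,0], Ψ x = ℓ x)
    (h7 : ∃ ℓ : (Fin 3 → ℝ) →ₗ[ℝ] ℝ, ∀ x ∈ cone3 ![0,0,1] ![0,-1,-(a:ℝ)] ![-1,-1,0], Ψ x = ℓ x)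
    (h8 : ∃ ℓ : (Fin 3 → ℝ) →ₗ[ℝ] ℝ, ∀ x ∈ cone3 ![0,-1,-(a:ℝ)] ![0,0,-1] ![-1,-1,0], Ψ x = ℓ x)
    (h9 : ∃ ℓ : (Fin 3 → ℝ) →ₗ[ℝ] ℝ, ∀ x ∈ cone3 ![0,0,-1] ![-1,1,-1] ![-1,0,-1], Ψ x = ℓ x)
    (h10 : ∃ ℓ : (Fin 3 → ℝ) →ₗ[ℝ] ℝ, ∀ x ∈ cone3 ![0,0,-1] ![-1,0,-1] ![-1,-1,0], Ψ x = ℓ x)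
    (h11 : ∃ ℓ : (Fin 3 → ℝ) →ₗ[ℝ] ℝ, ∀ x ∈ cone3 ![-1,1,-1] ![-1,0,-1] ![-1,-1,0], Ψ x = ℓ x)
    (h12 : ∃ ℓ : (Fin 3 → ℝ) →ₗ[ℝ] ℝ, ∀ x ∈ cone3 ![0,1,0] ![-1,1,-1] ![-1,-1,0], Ψ x = ℓ x) :
    ∃ ℓ : (Fin 3 → ℝ) →ₗ[ℝ] ℝ, ∀ x : Fin 3 → ℝ, Ψ x = ℓ x := by
  obtain ⟨ℓ1, h1⟩ := h1
  obtain ⟨ℓ2, h2⟩ := h2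
  obtain ⟨ℓ3, h3⟩ := h3
  obtain ⟨ℓ4, h4⟩ := h4
  obtain ⟨ℓ6, h6⟩ := h6
  obtain ⟨ℓ8, h8⟩ := h8
  obtain ⟨ℓ9, h9⟩ := h9
  obtain ⟨ℓ10, h10⟩ := h10
  -- the eight values of Ψ at the rays
  set ψ1 := Ψ ![1,0,0] with hψ1
  set ψ2 := Ψ ![0,1,0] with hψ2
  set ψ3 := Ψ ![0,0,1] with hψ3
  set ψ4 := Ψ ![0,-1,-(a:ℝ)] with hψ4
  set ψ5 := Ψ ![0,0,-1] with hψ5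
  set ψ6 := Ψ ![-1,1,-1] with hψ6
  set ψ7 := Ψ ![-1,0,-1] with hψ7
  set ψ8 := Ψ ![-1,-1,0] with hψ8
  -- subgradient inequalities
  have k15 : 0 * ψ1 + 0 * ψ2 + (-1) * ψ3 ≤ ψ5 :=
    le_on_all hconv h1 0 0 (-1) ![0,0,-1] (by funext i; fin_cases i <;> simp)
  have k17 : (-1) * ψ1 + 0 * ψ2 + (-1) * ψ3 ≤ ψ7 :=
    le_on_all hconv h1 (-1) 0 (-1) ![-1,0,-1] (by funext i; fin_cases i <;> simp)
  have k18 : (-1) * ψ1 + (-1) * ψ2 + 0 * ψ3 ≤ ψ8 :=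
    le_on_all hconv h1 (-1) (-1) 0 ![-1,-1,0] (by funext i; fin_cases i <;> simp)
  have k14 : 0 * ψ1 + (-1) * ψ2 + (-(a:ℝ)) * ψ3 ≤ ψ4 :=
    le_on_all hconv h1 0 (-1) (-(a:ℝ)) ![0,-1,-(a:ℝ)] (by funext i; fin_cases i <;> simp)
  have k28 : (-1) * ψ1 + (a:ℝ) * ψ3 + 1 * ψ4 ≤ ψ8 :=
    le_on_all hconv h2 (-1) (a:ℝ) 1 ![-1,-1,0] (by funext i; fin_cases i <;> simp)
  have k38 : (-1) * ψ1 + 1 * ψ4 + (-(a:ℝ)) * ψ5 ≤ ψ8 :=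
    le_on_all hconv h3 (-1) 1 (-(a:ℝ)) ![-1,-1,0] (by funext i; fin_cases i <;> simp)
  have k42 : 1 * ψ1 + (-1) * ψ5 + 1 * ψ6 ≤ ψ2 :=
    le_on_all hconv h4 1 (-1) 1 ![0,1,0] (by funext i; fin_cases i <;> simp)
  have k66 : 2 * ψ2 + (-1) * ψ3 + 1 * ψ8 ≤ ψ6 :=
    le_on_all hconv h6 2 (-1) 1 ![-1,1,-1] (by funext i; fin_cases i <;> simp <;> norm_num)
  have k86 : (-2) * ψ4 + (2*(a:ℝ)+1) * ψ5 + 1 * ψ8 ≤ ψ6 :=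
    le_on_all hconv h8 (-2) (2*(a:ℝ)+1) 1 ![-1,1,-1]
      (by funext i; fin_cases i <;> simp <;> ring)
  have k94 : (a:ℝ) * ψ5 + (-1) * ψ6 + 1 * ψ7 ≤ ψ4 :=
    le_on_all hconv h9 (a:ℝ) (-1) 1 ![0,-1,-(a:ℝ)]
      (by funext i; fin_cases i <;> simp <;> ring)
  -- the three key equalities
  have hU : ψ3 + ψ5 = 0 ∧ ψ1 + ψ3 + ψ7 = 0 ∧ ψ1 + ψ2 + ψ8 = 0 := by
    have hcase : 1 ≤ a ∨ a ≤ -2 := by omega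
    rcases hcase with hc | hc
    · have hc' : (1:ℝ) ≤ (a:ℝ) := by exact_mod_cast hc
      have hprod : 0 ≤ ((a:ℝ) - 1) * (ψ3 + ψ5) := by
        apply mul_nonneg (by linarith) (by linarith [k15])
      refine ⟨by linarith [k15, k28, k42, k66, k86, hprod],
        by linarith [k15, k17, k28, k42, k66, k86, k94, hprod],
        by linarith [k15, k18, k28, k42, k66, k86, hprod]⟩
    · have hc' : (a:ℝ) ≤ -2 := by exact_mod_cast hc
      have hprod : 0 ≤ (-(a:ℝ) - 2) * (ψ3 + ψ5) := by
        apply mul_nonneg (by linarith) (by linarith [k15])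
      refine ⟨by linarith [k15, k14, k38, k42, k66, hprod],
        by linarith [k15, k17, k14, k38, k42, k66, k94, hprod],
        by linarith [k15, k18, k14, k38, k42, k66, hprod]⟩
  obtain ⟨hU1, hU2, hU3⟩ := hU
  -- the linear functional
  refine ⟨ψ1 • LinearMap.proj 0 + ψ2 • LinearMap.proj 1 + ψ3 • LinearMap.proj 2, fun x => ?_⟩
  have hℓx : (ψ1 • LinearMap.proj 0 + ψ2 • LinearMap.proj 1 + ψ3 • LinearMap.proj 2 :
      (Fin 3 → ℝ) →ₗ[ℝ] ℝ) x = x 0 * ψ1 + x 1 * ψ2 + x 2 * ψ3 := by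
    simp [LinearMap.proj_apply]; ring
  rw [hℓx]
  -- lower bound
  have klow : x 0 * ψ1 + x 1 * ψ2 + x 2 * ψ3 ≤ Ψ x :=
    le_on_all hconv h1 (x 0) (x 1) (x 2) x
      (by funext i; fin_cases i <;> simp)
  -- upper bound via the midpoint trick
  set M : ℝ := |x 0| + |x 1| + |x 2| with hM
  have hMx0 : -M ≤ x 0 ∧ x 0 ≤ M := by
    constructor <;> [nlinarith [neg_abs_le (x 0), abs_nonneg (x 1), abs_nonneg (x 2)];
      nlinarith [le_abs_self (x 0), abs_nonneg (x 1), abs_nonneg (x 2)]]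
  have hMx1 : -M ≤ x 1 ∧ x 1 ≤ M := by
    constructor <;> [nlinarith [neg_abs_le (x 1), abs_nonneg (x 0), abs_nonneg (x 2)];
      nlinarith [le_abs_self (x 1), abs_nonneg (x 0), abs_nonneg (x 2)]]
  have hMx2 : -M ≤ x 2 ∧ x 2 ≤ M := by
    constructor <;> [nlinarith [neg_abs_le (x 2), abs_nonneg (x 0), abs_nonneg (x 1)];
      nlinarith [le_abs_self (x 2), abs_nonneg (x 0), abs_nonneg (x 1)]]
  set P : Fin 3 → ℝ := ![x 0 + 2*M, x 1 + M, x 2 + 2*M] with hP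
  set Q : Fin 3 → ℝ := ![x 0 - 2*M, x 1 - M, x 2 - 2*M] with hQ
  have hPval : Ψ P = (x 0 + 2*M) * ψ1 + (x 1 + M) * ψ2 + (x 2 + 2*M) * ψ3 :=
    eq_on_cone h1 (by linarith [hMx0.1, hMx1.1, hMx2.1]) (by linarith [hMx1.1])
      (by linarith [hMx2.1]) (by funext i; fin_cases i <;> simp [hP] <;> ring)
  have hQα : 0 ≤ M + x 0 - x 1 - x 2 := by
    have := neg_abs_le (x 0); have := le_abs_self (x 1); have := le_abs_self (x 2)
    simp only [hM]; linarith
  have hQβ : 0 ≤ M - x 0 + x 1 := by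
    have := le_abs_self (x 0); have := neg_abs_le (x 1); have := abs_nonneg (x 2)
    simp only [hM]; linarith
  have hQγ : 0 ≤ M - x 1 := by
    have := le_abs_self (x 1); have := abs_nonneg (x 0); have := abs_nonneg (x 2)
    simp only [hM]; linarith
  have hQval0 : Ψ Q = (M + x 0 - x 1 - x 2) * ψ5 + (M - x 0 + x 1) * ψ7 + (M - x 1) * ψ8 :=
    eq_on_cone h10 hQα hQβ hQγ (by funext i; fin_cases i <;> simp [hQ] <;> ring)
  have hQval : Ψ Q = (x 0 - 2*M) * ψ1 + (x 1 - M) * ψ2 + (x 2 - 2*M) * ψ3 := by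
    rw [hQval0]
    linear_combination (M + x 0 - x 1 - x 2) * hU1 + (M - x 0 + x 1) * hU2 + (M - x 1) * hU3
  have hxPQ : x = (1/2 : ℝ) • P + (1 - (1/2 : ℝ)) • Q := by
    funext i; fin_cases i <;> simp [hP, hQ] <;> ring
  have hmid := hconv P Q (1/2) (by norm_num) (by norm_num)
  rw [← hxPQ] at hmid
  have hup : Ψ x ≤ x 0 * ψ1 + x 1 * ψ2 + x 2 * ψ3 := by
    rw [hPval, hQval] at hmid; nlinarith [hmid]
  linarith [klow, hup]
end

section
/- Fix nonzero integers a and b such that not both |a| = 1 and |b| = 1. Let v1=(-1,b,0), v2=(0,-1,0), v3=(1,-1,0), v4=(-1,0,-1), v5=(0,0,-1), v6=(0,1,0), v7=(0,0,1), v8=(1,0,a) in ℝ³, and consider the 12 cones ⟨v1,v2,v4⟩, ⟨v2,v3,v4⟩, ⟨v3,v4,v5⟩, ⟨v4,v5,v6⟩, ⟨v1,v4,v6⟩, ⟨v1,v6,v7⟩, ⟨v1,v2,v7⟩, ⟨v2,v3,v7⟩, ⟨v3,v5,v8⟩, ⟨v5,v6,v8⟩, ⟨v3,v7,v8⟩,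 ⟨v6,v7,v8⟩. If Ψ : ℝ³ → ℝ is a convex function such that for each of these 12 cones there exists a linear functional ℓ : ℝ³ → ℝ with Ψ(x) = ℓ(x) for all x in that cone, then there exists a single linear functional ℓ : ℝ³ → ℝ with Ψ(x) = ℓ(x) for all x ∈ ℝ³. -/
lemma lin3 (ℓ : (Fin 3 → ℝ) →ₗ[ℝ] ℝ) {u v w x : Fin 3 → ℝ} {α β γ : ℝ}
    (hx : x = α • u + β • v + γ • w) : ℓ x = α * ℓ u + β * ℓ v + γ * ℓ w := by
  simp [hx, smul_eq_mul]

lemma msub (r : ℝ) : max r 0 - max (-r) 0 = r := by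
  rcases le_total r 0 with h | h
  · rw [max_eq_right h, max_eq_left (by linarith : (0:ℝ) ≤ -r)]; ring
  · rw [max_eq_left h, max_eq_right (by linarith : -r ≤ (0:ℝ))]; ring

lemma wall {Ψ : (Fin 3 → ℝ) → ℝ}
    (hconv : ∀ x y : Fin 3 → ℝ, ∀ t : ℝ, 0 ≤ t → t ≤ 1 →
      Ψ (t • x + (1 - t) • y) ≤ t * Ψ x + (1 - t) * Ψ y)
    {u v w : Fin 3 → ℝ} {ℓ : (Fin 3 → ℝ) →ₗ[ℝ] ℝ}
    (hl : ∀ p ∈ cone3 u v w, Ψ p = ℓ p)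
    (x : Fin 3 → ℝ) (α β γ : ℝ) (hx : x = α • u + β • v + γ • w) :
    α * Ψ u + β * Ψ v + γ * Ψ w ≤ Ψ x := by
  have hu : Ψ u = ℓ u := hl u ⟨1,0,0, by norm_num, by norm_num, by norm_num, by module⟩
  have hv : Ψ v = ℓ v := hl v ⟨0,1,0, by norm_num, by norm_num, by norm_num, by module⟩
  have hw : Ψ w = ℓ w := hl w ⟨0,0,1, by norm_num, by norm_num, by norm_num, by module⟩
  have habs : ∀ r : ℝ, 0 ≤ (r + |r|)/2 := fun r => by
    have := neg_abs_le r; linarith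
  set y : Fin 3 → ℝ := ((α+|α|)/2) • u + ((β+|β|)/2) • v + ((γ+|γ|)/2) • w with hydef
  set z : Fin 3 → ℝ := |α| • u + |β| • v + |γ| • w with hzdef
  have hy : Ψ y = ℓ y := hl y ⟨_,_,_, habs α, habs β, habs γ, rfl⟩
  have hz : Ψ z = ℓ z := hl z ⟨_,_,_, abs_nonneg α, abs_nonneg β, abs_nonneg γ, rfl⟩
  have hmid : y = (1/2:ℝ) • x + (1-(1/2:ℝ)) • z := by rw [hx, hydef, hzdef]; module
  have hc := hconv x z (1/2) (by norm_num) (by norm_num)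
  rw [← hmid] at hc
  have ey : ℓ y = ((α+|α|)/2) * ℓ u + ((β+|β|)/2) * ℓ v + ((γ+|γ|)/2) * ℓ w := lin3 ℓ hydef
  have ez : ℓ z = |α| * ℓ u + |β| * ℓ v + |γ| * ℓ w := lin3 ℓ hzdef
  rw [hu, hv, hw]
  rw [hy, hz, ey, ez] at hc
  linarith [hc]

lemma key (A B t1 t2 t3 t7 t8 : ℝ)
    (hA : 1 ≤ A ∨ A ≤ -1) (hB : 1 ≤ B ∨ B ≤ -1)
    (hAB : 2 ≤ A ∨ A ≤ -2 ∨ 2 ≤ B ∨ B ≤ -2)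
    (n1 : 0 ≤ t1) (n2 : 0 ≤ t2) (n3 : 0 ≤ t3) (n7 : 0 ≤ t7) (n8 : 0 ≤ t8)
    (e1 : 0 ≤ t1 + (B-1)*t2 + t3)
    (e3 : t1 + B*t2 ≤ t7)
    (e4 : t3 ≤ t2)
    (e9 : t1 ≤ t7)
    (e10 : A*t7 ≤ t8 + t1)
    (e11 : t3 + A*t7 ≤ t8 + t2)
    (e12 : t8 ≤ t3)
    (e14 : t8 ≤ t3 + A*t7) :
    t2 = 0 ∧ t3 = 0 ∧ t7 = 0 := by
  rcases hA with hA | hA <;> rcases hB with hB | hB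
  · -- 1 ≤ A, 1 ≤ B
    have p1 : 0 ≤ (A-1)*t7 := mul_nonneg (by linarith) n7
    have p2 : 0 ≤ (B-1)*t2 := mul_nonneg (by linarith) n2
    rcases hAB with h | h | h | h
    · have p3 : 0 ≤ (A-2)*t7 := mul_nonneg (by linarith) n7
      refine ⟨by linarith, by linarith, by linarith⟩
    · linarith
    · have p3 : 0 ≤ (B-2)*t2 := mul_nonneg (by linarith) n2
      refine ⟨by linarith, by linarith, by linarith⟩
    · linarith
  · -- 1 ≤ A, B ≤ -1
    have p1 : 0 ≤ (A-1)*t7 := mul_nonneg (by linarith) n7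
    have p2 : 0 ≤ (-B-1)*t2 := mul_nonneg (by linarith) n2
    rcases hAB with h | h | h | h
    · have p3 : 0 ≤ (A-2)*t7 := mul_nonneg (by linarith) n7
      refine ⟨by linarith, by linarith, by linarith⟩
    · linarith
    · linarith
    · have p3 : 0 ≤ (-B-2)*t2 := mul_nonneg (by linarith) n2
      refine ⟨by linarith, by linarith, by linarith⟩
  · -- A ≤ -1, 1 ≤ B
    have p1 : 0 ≤ (-A-1)*t7 := mul_nonneg (by linarith) n7
    have p2 : 0 ≤ (B-1)*t2 := mul_nonneg (by linarith) n2
    rcases hAB with h | h | h | h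
    · linarith
    · have p3 : 0 ≤ (-A-2)*t7 := mul_nonneg (by linarith) n7
      refine ⟨by linarith, by linarith, by linarith⟩
    · have p3 : 0 ≤ (B-2)*t2 := mul_nonneg (by linarith) n2
      refine ⟨by linarith, by linarith, by linarith⟩
    · linarith
  · -- A ≤ -1, B ≤ -1
    have p1 : 0 ≤ (-A-1)*t7 := mul_nonneg (by linarith) n7
    have p2 : 0 ≤ (-B-1)*t2 := mul_nonneg (by linarith) n2
    rcases hAB with h | h | h | h
    · linarith
    · have p3 : 0 ≤ (-A-2)*t7 := mul_nonneg (by linarith) n7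
      refine ⟨by linarith, by linarith, by linarith⟩
    · linarith
    · have p3 : 0 ≤ (-B-2)*t2 := mul_nonneg (by linarith) n2
      refine ⟨by linarith, by linarith, by linarith⟩

theorem stmt2 (a b : ℤ) (ha : a ≠ 0) (hb : b ≠ 0) (hab : ¬(|a| = 1 ∧ |b| = 1)) (Ψ : (Fin 3 → ℝ) → ℝ)
    (hconv : ∀ x y : Fin 3 → ℝ, ∀ t : ℝ, 0 ≤ t → t ≤ 1 →
      Ψ (t • x + (1 - t) • y) ≤ t * Ψ x + (1 - t) * Ψ y)
    (h1 : ∃ ℓ : (Fin 3 → ℝ) →ₗ[ℝ] ℝ, ∀ x ∈ cone3 ![-1,(b:ℝ),0] ![0,-1,0] ![-1,0,-1], Ψ x = ℓ x)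
    (h2 : ∃ ℓ : (Fin 3 → ℝ) →ₗ[ℝ] ℝ, ∀ x ∈ cone3 ![0,-1,0] ![1,-1,0] ![-1,0,-1], Ψ x = ℓ x)
    (h3 : ∃ ℓ : (Fin 3 → ℝ) →ₗ[ℝ] ℝ, ∀ x ∈ cone3 ![1,-1,0] ![-1,0,-1] ![0,0,-1], Ψ x = ℓ x)
    (h4 : ∃ ℓ : (Fin 3 → ℝ) →ₗ[ℝ] ℝ, ∀ x ∈ cone3 ![-1,0,-1] ![0,0,-1] ![0,1,0], Ψ x = ℓ x)
    (h5 : ∃ ℓ : (Fin 3 → ℝ) →ₗ[ℝ] ℝ, ∀ x ∈ cone3 ![-1,(b:ℝ),0] ![-1,0,-1] ![0,1,0], Ψ x = ℓ x)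
    (h6 : ∃ ℓ : (Fin 3 → ℝ) →ₗ[ℝ] ℝ, ∀ x ∈ cone3 ![-1,(b:ℝ),0] ![0,1,0] ![0,0,1], Ψ x = ℓ x)
    (h7 : ∃ ℓ : (Fin 3 → ℝ) →ₗ[ℝ] ℝ, ∀ x ∈ cone3 ![-1,(b:ℝ),0] ![0,-1,0] ![0,0,1], Ψ x = ℓ x)
    (h8 : ∃ ℓ : (Fin 3 → ℝ) →ₗ[ℝ] ℝ, ∀ x ∈ cone3 ![0,-1,0] ![1,-1,0] ![0,0,1], Ψ x = ℓ x)
    (h9 : ∃ ℓ : (Fin 3 → ℝ) →ₗ[ℝ] ℝ, ∀ x ∈ cone3 ![1,-1,0] ![0,0,-1] ![1,0,(a:ℝ)], Ψ x = ℓ x)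
    (h10 : ∃ ℓ : (Fin 3 → ℝ) →ₗ[ℝ] ℝ, ∀ x ∈ cone3 ![0,0,-1] ![0,1,0] ![1,0,(a:ℝ)], Ψ x = ℓ x)
    (h11 : ∃ ℓ : (Fin 3 → ℝ) →ₗ[ℝ] ℝ, ∀ x ∈ cone3 ![1,-1,0] ![0,0,1] ![1,0,(a:ℝ)], Ψ x = ℓ x)
    (h12 : ∃ ℓ : (Fin 3 → ℝ) →ₗ[ℝ] ℝ, ∀ x ∈ cone3 ![0,1,0] ![0,0,1] ![1,0,(a:ℝ)], Ψ x = ℓ x) :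
    ∃ ℓ : (Fin 3 → ℝ) →ₗ[ℝ] ℝ, ∀ x : Fin 3 → ℝ, Ψ x = ℓ x := by
  obtain ⟨l1, H1⟩ := h1
  obtain ⟨l3, H3⟩ := h3
  obtain ⟨l4, H4⟩ := h4
  obtain ⟨l5, H5⟩ := h5
  obtain ⟨l6, H6⟩ := h6
  obtain ⟨l8, H8⟩ := h8
  obtain ⟨l9, H9⟩ := h9
  obtain ⟨l11, H11⟩ := h11
  have hA : (1:ℝ) ≤ (a:ℝ) ∨ (a:ℝ) ≤ -1 := by
    rcases (by omega : 1 ≤ a ∨ a ≤ -1) with h | h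
    · exact Or.inl (by exact_mod_cast h)
    · exact Or.inr (by exact_mod_cast h)
  have hB : (1:ℝ) ≤ (b:ℝ) ∨ (b:ℝ) ≤ -1 := by
    rcases (by omega : 1 ≤ b ∨ b ≤ -1) with h | h
    · exact Or.inl (by exact_mod_cast h)
    · exact Or.inr (by exact_mod_cast h)
  have hABz : 2 ≤ a ∨ a ≤ -2 ∨ 2 ≤ b ∨ b ≤ -2 := by
    rw [abs_eq (by norm_num : (0:ℤ) ≤ 1), abs_eq (by norm_num : (0:ℤ) ≤ 1)] at hab
    omega
  have hAB : 2 ≤ (a:ℝ) ∨ (a:ℝ) ≤ -2 ∨ 2 ≤ (b:ℝ) ∨ (b:ℝ) ≤ -2 := by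
    rcases hABz with h | h | h | h
    · exact Or.inl (by exact_mod_cast h)
    · exact Or.inr (Or.inl (by exact_mod_cast h))
    · exact Or.inr (Or.inr (Or.inl (by exact_mod_cast h)))
    · exact Or.inr (Or.inr (Or.inr (by exact_mod_cast h)))
  have P1 := wall hconv H1 ![1,-1,0] (-1:ℝ) (1-(b:ℝ)) (0:ℝ) (by funext i; fin_cases i <;> simp <;> ring)
  have P2 := wall hconv H1 ![0,0,1] (1:ℝ) ((b:ℝ)) (-1:ℝ) (by funext i; fin_cases i <;> simp <;> ring)
  have P3 := wall hconv H3 ![0,-1,0] (1:ℝ) (1:ℝ) (-1:ℝ) (by funext i; fin_cases i <;> simp <;> ring)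
  have P4 := wall hconv H5 ![0,0,1] (1:ℝ) (-1:ℝ) (-(b:ℝ)) (by funext i; fin_cases i <;> simp <;> ring)
  have P5 := wall hconv H6 ![1,0,(a:ℝ)] (-1:ℝ) ((b:ℝ)) ((a:ℝ)) (by funext i; fin_cases i <;> simp <;> ring)
  have P6 := wall hconv H8 ![1,0,(a:ℝ)] (-1:ℝ) (1:ℝ) ((a:ℝ)) (by funext i; fin_cases i <;> simp <;> ring)
  have P7 := wall hconv H9 ![0,1,0] (-1:ℝ) ((a:ℝ)) (1:ℝ) (by funext i; fin_cases i <;> simp <;> ring)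
  have P8 := wall hconv H11 ![0,1,0] (-1:ℝ) (-(a:ℝ)) (1:ℝ) (by funext i; fin_cases i <;> simp <;> ring)
  have Q1 := wall hconv H4 ![-1,(b:ℝ),0] (1:ℝ) (-1:ℝ) ((b:ℝ)) (by funext i; fin_cases i <;> simp <;> ring)
  have Q2 := wall hconv H4 ![0,-1,0] (0:ℝ) (0:ℝ) (-1:ℝ) (by funext i; fin_cases i <;> simp <;> ring)
  have Q3 := wall hconv H4 ![1,-1,0] (-1:ℝ) (1:ℝ) (-1:ℝ) (by funext i; fin_cases i <;> simp <;> ring)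
  have Q4 := wall hconv H4 ![0,0,1] (0:ℝ) (-1:ℝ) (0:ℝ) (by funext i; fin_cases i <;> simp <;> ring)
  have Q5 := wall hconv H4 ![1,0,(a:ℝ)] (-1:ℝ) (1-(a:ℝ)) (0:ℝ) (by funext i; fin_cases i <;> simp <;> ring)
  obtain ⟨ht2, ht3, ht7⟩ := key (a:ℝ) (b:ℝ)
      (Ψ ![-1,(b:ℝ),0] - (Ψ ![-1,0,-1] - Ψ ![0,0,-1] + (b:ℝ)*Ψ ![0,1,0]))
      (Ψ ![0,-1,0] + Ψ ![0,1,0])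
      (Ψ ![1,-1,0] + Ψ ![-1,0,-1] - Ψ ![0,0,-1] + Ψ ![0,1,0])
      (Ψ ![0,0,1] + Ψ ![0,0,-1])
      (Ψ ![1,0,(a:ℝ)] + Ψ ![-1,0,-1] - (1-(a:ℝ))*Ψ ![0,0,-1])
      hA hB hAB
      (by linarith [Q1]) (by linarith [Q2]) (by linarith [Q3]) (by linarith [Q4]) (by linarith [Q5])
      (by linarith [P1]) (by linarith [P2]) (by linarith [P3]) (by linarith [P4])
      (by linarith [P5]) (by linarith [P6]) (by linarith [P7]) (by linarith [P8])
  have hg4 : Ψ ![-1,0,-1] = l4 ![-1,0,-1] := H4 _ ⟨1,0,0, by norm_num, by norm_num, by norm_num, by module⟩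
  have hg5 : Ψ ![0,0,-1] = l4 ![0,0,-1] := H4 _ ⟨0,1,0, by norm_num, by norm_num, by norm_num, by module⟩
  have hg6 : Ψ ![0,1,0] = l4 ![0,1,0] := H4 _ ⟨0,0,1, by norm_num, by norm_num, by norm_num, by module⟩
  have hg2 : Ψ ![0,-1,0] = l8 ![0,-1,0] := H8 _ ⟨1,0,0, by norm_num, by norm_num, by norm_num, by module⟩
  have hg3 : Ψ ![1,-1,0] = l8 ![1,-1,0] := H8 _ ⟨0,1,0, by norm_num, by norm_num, by norm_num, by module⟩
  have hg7 : Ψ ![0,0,1] = l8 ![0,0,1] := H8 _ ⟨0,0,1, by norm_num, by norm_num, by norm_num, by module⟩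
  refine ⟨l4, fun x => ?_⟩
  -- lower bound
  have hdec : x = (-(x 0)) • ![-1,0,-1] + (x 0 - x 2) • ![0,0,-1] + (x 1) • ![0,1,0] := by
    funext i; fin_cases i <;> simp <;> ring
  have hwx := wall hconv H4 x (-(x 0)) (x 0 - x 2) (x 1) hdec
  have hlx := lin3 l4 hdec
  rw [← hg4, ← hg5, ← hg6] at hlx
  -- upper bound
  set c3 := max (x 0) 0 with hc3
  set a4 := max (-(x 0)) 0 with ha4
  set a6 := max (x 1 + c3) 0 with ha6
  set c2 := max (-(x 1 + c3)) 0 with hc2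
  set c7 := max (x 2 + a4) 0 with hc7
  set a5 := max (-(x 2 + a4)) 0 with ha5
  have hc3n : 0 ≤ c3 := le_max_right _ _
  have ha4n : 0 ≤ a4 := le_max_right _ _
  have ha6n : 0 ≤ a6 := le_max_right _ _
  have hc2n : 0 ≤ c2 := le_max_right _ _
  have hc7n : 0 ≤ c7 := le_max_right _ _
  have ha5n : 0 ≤ a5 := le_max_right _ _
  have hsum : x = (a4 • ![-1,0,-1] + a5 • ![0,0,-1] + a6 • ![0,1,0]) + (c2 • ![0,-1,0] + c3 • ![1,-1,0] + c7 • ![0,0,1]) := by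
    have m1 := msub (x 0)
    have m2 := msub (x 1 + c3)
    have m3 := msub (x 2 + a4)
    rw [← hc3, ← ha4] at m1
    rw [← ha6, ← hc2] at m2
    rw [← hc7, ← ha5] at m3
    funext i; fin_cases i <;> simp <;> linarith [m1, m2, m3]
  have hmem2u : ((2:ℝ) • (a4 • ![-1,0,-1] + a5 • ![0,0,-1] + a6 • ![0,1,0])) ∈ cone3 ![-1,0,-1] ![0,0,-1] ![0,1,0] :=
    ⟨2*a4, 2*a5, 2*a6, by linarith, by linarith, by linarith, by module⟩
  have hmem2w : ((2:ℝ) • (c2 • ![0,-1,0] + c3 • ![1,-1,0] + c7 • ![0,0,1])) ∈ cone3 ![0,-1,0] ![1,-1,0] ![0,0,1] :=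
    ⟨2*c2, 2*c3, 2*c7, by linarith, by linarith, by linarith, by module⟩
  have hP2u : Ψ ((2:ℝ) • (a4 • ![-1,0,-1] + a5 • ![0,0,-1] + a6 • ![0,1,0])) = l4 ((2:ℝ) • (a4 • ![-1,0,-1] + a5 • ![0,0,-1] + a6 • ![0,1,0])) := H4 _ hmem2u
  have hP2w : Ψ ((2:ℝ) • (c2 • ![0,-1,0] + c3 • ![1,-1,0] + c7 • ![0,0,1])) = l8 ((2:ℝ) • (c2 • ![0,-1,0] + c3 • ![1,-1,0] + c7 • ![0,0,1])) := H8 _ hmem2w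
  have hval2u : l4 ((2:ℝ) • (a4 • ![-1,0,-1] + a5 • ![0,0,-1] + a6 • ![0,1,0])) = (2*a4) * l4 ![-1,0,-1] + (2*a5) * l4 ![0,0,-1] + (2*a6) * l4 ![0,1,0] :=
    lin3 l4 (by module)
  have hval2w : l8 ((2:ℝ) • (c2 • ![0,-1,0] + c3 • ![1,-1,0] + c7 • ![0,0,1])) = (2*c2) * l8 ![0,-1,0] + (2*c3) * l8 ![1,-1,0] + (2*c7) * l8 ![0,0,1] :=
    lin3 l8 (by module)
  rw [← hg4, ← hg5, ← hg6] at hval2u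
  rw [← hg2, ← hg3, ← hg7] at hval2w
  have hmidx : (1/2:ℝ) • ((2:ℝ) • (a4 • ![-1,0,-1] + a5 • ![0,0,-1] + a6 • ![0,1,0])) + (1-(1/2:ℝ)) • ((2:ℝ) • (c2 • ![0,-1,0] + c3 • ![1,-1,0] + c7 • ![0,0,1])) = x := by
    rw [hsum]; module
  have hcx := hconv ((2:ℝ) • (a4 • ![-1,0,-1] + a5 • ![0,0,-1] + a6 • ![0,1,0])) ((2:ℝ) • (c2 • ![0,-1,0] + c3 • ![1,-1,0] + c7 • ![0,0,1])) (1/2) (by norm_num) (by norm_num)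
  rw [hmidx] at hcx
  have hl4x : l4 x = l4 (a4 • ![-1,0,-1] + a5 • ![0,0,-1] + a6 • ![0,1,0]) + l4 (c2 • ![0,-1,0] + c3 • ![1,-1,0] + c7 • ![0,0,1]) := by
    rw [hsum, map_add]
  have hlu : l4 (a4 • ![-1,0,-1] + a5 • ![0,0,-1] + a6 • ![0,1,0]) = a4 * l4 ![-1,0,-1] + a5 * l4 ![0,0,-1] + a6 * l4 ![0,1,0] := lin3 l4 rfl
  have hlw : l4 (c2 • ![0,-1,0] + c3 • ![1,-1,0] + c7 • ![0,0,1]) = c2 * l4 ![0,-1,0] + c3 * l4 ![1,-1,0] + c7 * l4 ![0,0,1] := lin3 l4 rfl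
  have hl42 : l4 ![0,-1,0] = (0:ℝ) * l4 ![-1,0,-1] + (0:ℝ) * l4 ![0,0,-1] + (-1:ℝ) * l4 ![0,1,0] :=
    lin3 l4 (by funext i; fin_cases i <;> simp)
  have hl43 : l4 ![1,-1,0] = (-1:ℝ) * l4 ![-1,0,-1] + (1:ℝ) * l4 ![0,0,-1] + (-1:ℝ) * l4 ![0,1,0] :=
    lin3 l4 (by funext i; fin_cases i <;> simp <;> ring)
  have hl47 : l4 ![0,0,1] = (0:ℝ) * l4 ![-1,0,-1] + (-1:ℝ) * l4 ![0,0,-1] + (0:ℝ) * l4 ![0,1,0] :=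
    lin3 l4 (by funext i; fin_cases i <;> simp)
  rw [← hg4, ← hg5, ← hg6] at hl42 hl43 hl47 hlu
  rw [hl42, hl43, hl47] at hlw
  have pc2 : c2 * (Ψ ![0,-1,0] + Ψ ![0,1,0]) = 0 := by rw [ht2, mul_zero]
  have pc3 : c3 * (Ψ ![1,-1,0] + Ψ ![-1,0,-1] - Ψ ![0,0,-1] + Ψ ![0,1,0]) = 0 := by rw [ht3, mul_zero]
  have pc7 : c7 * (Ψ ![0,0,1] + Ψ ![0,0,-1]) = 0 := by rw [ht7, mul_zero]
  have hub : Ψ x ≤ l4 x := by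
    rw [hl4x, hlu, hlw]
    linarith [hcx, hP2u, hP2w, hval2u, hval2w, pc2, pc3, pc7]
  have hlb : l4 x ≤ Ψ x := by rw [hlx]; linarith [hwx]
  linarith [hub, hlb]
end

section
/- Let v1=(1,0,0), v2=(0,1,0), v3=(0,0,1), v4=(0,-1,-1), v5=(-1,0,-1), v6=(-2,-1,0), v7=(-1,-1,-1), v8=(-2,-1,-1) in ℝ³. Every point of ℝ³ lies in at least one of the 12 cones ⟨v1,v2,v3⟩, ⟨v1,v2,v4⟩, ⟨v2,v4,v5⟩, ⟨v2,v3,v5⟩, ⟨v3,v5,v6⟩, ⟨v1,v3,v6⟩, ⟨v1,v4,v6⟩, ⟨v4,v5,v7⟩, ⟨v4,v6,v7⟩, ⟨v5,v6,v8⟩, ⟨v5,v7,v8⟩, ⟨v6,v7,v8⟩. -/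
lemma mem_cone3 (u v w x : Fin 3 → ℝ) (α β γ : ℝ) (hα : 0 ≤ α) (hβ : 0 ≤ β) (hγ : 0 ≤ γ)
    (h : ∀ i, x i = α * u i + β * v i + γ * w i) : x ∈ cone3 u v w :=
  ⟨α, β, γ, hα, hβ, hγ, funext fun i => by
    rw [h i]; simp [Pi.add_apply, Pi.smul_apply, smul_eq_mul]⟩

theorem stmt5 : ∀ x : Fin 3 → ℝ,
      x ∈ cone3 ![1,0,0] ![0,1,0] ![0,0,1] ∨
      x ∈ cone3 ![1,0,0] ![0,1,0] ![0,-1,-1] ∨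
      x ∈ cone3 ![0,1,0] ![0,-1,-1] ![-1,0,-1] ∨
      x ∈ cone3 ![0,1,0] ![0,0,1] ![-1,0,-1] ∨
      x ∈ cone3 ![0,0,1] ![-1,0,-1] ![-2,-1,0] ∨
      x ∈ cone3 ![1,0,0] ![0,0,1] ![-2,-1,0] ∨
      x ∈ cone3 ![1,0,0] ![0,-1,-1] ![-2,-1,0] ∨
      x ∈ cone3 ![0,-1,-1] ![-1,0,-1] ![-1,-1,-1] ∨
      x ∈ cone3 ![0,-1,-1] ![-2,-1,0] ![-1,-1,-1] ∨
      x ∈ cone3 ![-1,0,-1] ![-2,-1,0] ![-2,-1,-1] ∨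
      x ∈ cone3 ![-1,0,-1] ![-1,-1,-1] ![-2,-1,-1] ∨
      x ∈ cone3 ![-2,-1,0] ![-1,-1,-1] ![-2,-1,-1] := by
  intro x
  obtain ⟨a, b, c⟩ : ∃ a b c : ℝ, x 0 = a ∧ x 1 = b ∧ x 2 = c := ⟨x 0, x 1, x 2, rfl, rfl, rfl⟩
  rcases le_total 0 (x 0) with ha | ha
  · rcases le_total 0 (x 2) with hc | hc
    · rcases le_total 0 (x 1) with hb | hb
      · -- C1
        exact Or.inl (mem_cone3 _ _ _ x (x 0) (x 1) (x 2) ha hb hc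
          (fun i => by fin_cases i <;> simp <;> ring))
      · -- C6
        refine Or.inr (Or.inr (Or.inr (Or.inr (Or.inr (Or.inl
          (mem_cone3 _ _ _ x (x 0 - 2 * x 1) (x 2) (-(x 1)) (by linarith) (by linarith)
            (by linarith) (fun i => by fin_cases i <;> simp <;> ring)))))))
    · rcases le_total (x 2) (x 1) with hbc | hbc
      · -- C2
        exact Or.inr (Or.inl (mem_cone3 _ _ _ x (x 0) (x 1 - x 2) (-(x 2)) (by linarith)
          (by linarith) (by linarith) (fun i => by fin_cases i <;> simp <;> ring)))
      · -- C7
        refine Or.inr (Or.inr (Or.inr (Or.inr (Or.inr (Or.inr (Or.inl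
          (mem_cone3 _ _ _ x (x 0 + 2 * x 2 - 2 * x 1) (-(x 2)) (x 2 - x 1) (by linarith)
            (by linarith) (by linarith) (fun i => by fin_cases i <;> simp <;> ring))))))))
  · rcases le_total 0 (x 1) with hb | hb
    · rcases le_total (x 0) (x 2) with hac | hac
      · -- C4
        refine Or.inr (Or.inr (Or.inr (Or.inl
          (mem_cone3 _ _ _ x (x 1) (x 2 - x 0) (-(x 0)) (by linarith) (by linarith)
            (by linarith) (fun i => by fin_cases i <;> simp <;> ring)))))
      · -- C3
        refine Or.inr (Or.inr (Or.inl
          (mem_cone3 _ _ _ x (x 0 + x 1 - x 2) (x 0 - x 2) (-(x 0)) (by linarith) (by linarith)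
            (by linarith) (fun i => by fin_cases i <;> simp <;> ring))))
    · rcases le_total 0 (x 2) with hc | hc
      · rcases le_total (x 0) (2 * x 1) with h2 | h2
        · -- C5
          refine Or.inr (Or.inr (Or.inr (Or.inr (Or.inl
            (mem_cone3 _ _ _ x (x 2 + 2 * x 1 - x 0) (2 * x 1 - x 0) (-(x 1)) (by linarith)
              (by linarith) (by linarith) (fun i => by fin_cases i <;> simp <;> ring))))))
        · -- C6
          refine Or.inr (Or.inr (Or.inr (Or.inr (Or.inr (Or.inl
            (mem_cone3 _ _ _ x (x 0 - 2 * x 1) (x 2) (-(x 1)) (by linarith) (by linarith)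
              (by linarith) (fun i => by fin_cases i <;> simp <;> ring)))))))
      · rcases le_total (x 2) (x 1) with hbc | hbc
        · rcases le_total (x 2) (x 0) with hca | hca
          · rcases le_total (x 2) (x 0 + x 1) with hs | hs
            · -- C3
              refine Or.inr (Or.inr (Or.inl
                (mem_cone3 _ _ _ x (x 0 + x 1 - x 2) (x 0 - x 2) (-(x 0)) (by linarith)
                  (by linarith) (by linarith) (fun i => by fin_cases i <;> simp <;> ring))))
            · -- C8
              refine Or.inr (Or.inr (Or.inr (Or.inr (Or.inr (Or.inr (Or.inr (Or.inl
                (mem_cone3 _ _ _ x (x 0 - x 2) (x 1 - x 2) (x 2 - x 0 - x 1) (by linarith)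
                  (by linarith) (by linarith)
                  (fun i => by fin_cases i <;> simp <;> ring)))))))))
          · rcases le_total (x 1 + x 2) (x 0) with hs | hs
            · -- C11
              refine Or.inr (Or.inr (Or.inr (Or.inr (Or.inr (Or.inr (Or.inr (Or.inr (Or.inr
                (Or.inr (Or.inl
                (mem_cone3 _ _ _ x (x 1 - x 2) (x 0 - x 1 - x 2) (x 2 - x 0) (by linarith)
                  (by linarith) (by linarith)
                  (fun i => by fin_cases i <;> simp <;> ring))))))))))))
            · rcases le_total (2 * x 1 + x 2) (x 0) with ht | ht
              · -- C10
                refine Or.inr (Or.inr (Or.inr (Or.inr (Or.inr (Or.inr (Or.inr (Or.inr (Or.inr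
                  (Or.inl
                  (mem_cone3 _ _ _ x (2 * x 1 - x 0) (x 1 + x 2 - x 0) (x 0 - 2 * x 1 - x 2)
                    (by linarith) (by linarith) (by linarith)
                    (fun i => by fin_cases i <;> simp <;> ring)))))))))))
              · -- C5
                refine Or.inr (Or.inr (Or.inr (Or.inr (Or.inl
                  (mem_cone3 _ _ _ x (x 2 + 2 * x 1 - x 0) (2 * x 1 - x 0) (-(x 1)) (by linarith)
                    (by linarith) (by linarith)
                    (fun i => by fin_cases i <;> simp <;> ring))))))
        · rcases le_total (2 * x 1 - 2 * x 2) (x 0) with h1 | h1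
          · -- C7
            refine Or.inr (Or.inr (Or.inr (Or.inr (Or.inr (Or.inr (Or.inl
              (mem_cone3 _ _ _ x (x 0 + 2 * x 2 - 2 * x 1) (-(x 2)) (x 2 - x 1) (by linarith)
                (by linarith) (by linarith) (fun i => by fin_cases i <;> simp <;> ring))))))))
          · rcases le_total (2 * x 1 - x 2) (x 0) with h2 | h2
            · -- C9
              refine Or.inr (Or.inr (Or.inr (Or.inr (Or.inr (Or.inr (Or.inr (Or.inr (Or.inl
                (mem_cone3 _ _ _ x (x 0 + x 2 - 2 * x 1) (x 2 - x 1) (2 * x 1 - x 0 - 2 * x 2)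
                  (by linarith) (by linarith) (by linarith)
                  (fun i => by fin_cases i <;> simp <;> ring))))))))))
            · rcases le_total (2 * x 1) (x 0) with h3 | h3
              · -- C12
                refine Or.inr (Or.inr (Or.inr (Or.inr (Or.inr (Or.inr (Or.inr (Or.inr (Or.inr
                  (Or.inr (Or.inr
                  (mem_cone3 _ _ _ x (x 2 - x 1) (x 0 - 2 * x 1) (2 * x 1 - x 0 - x 2)
                    (by linarith) (by linarith) (by linarith)
                    (fun i => by fin_cases i <;> simp <;> ring))))))))))))
              · rcases le_total (2 * x 1 + x 2) (x 0) with h4 | h4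
                · -- C10
                  refine Or.inr (Or.inr (Or.inr (Or.inr (Or.inr (Or.inr (Or.inr (Or.inr (Or.inr
                    (Or.inl
                    (mem_cone3 _ _ _ x (2 * x 1 - x 0) (x 1 + x 2 - x 0) (x 0 - 2 * x 1 - x 2)
                      (by linarith) (by linarith) (by linarith)
                      (fun i => by fin_cases i <;> simp <;> ring)))))))))))
                · -- C5
                  refine Or.inr (Or.inr (Or.inr (Or.inr (Or.inl
                    (mem_cone3 _ _ _ x (x 2 + 2 * x 1 - x 0) (2 * x 1 - x 0) (-(x 1))
                      (by linarith) (by linarith) (by linarith)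
                      (fun i => by fin_cases i <;> simp <;> ring))))))
end

section
/- Let a be an integer with a ≥ 1. If d1, d2, d3, d4, d5, d6, d7, d8 are nonnegative real numbers satisfying d1 + d8 ≥ a·d3 + d4, 2·d4 + d6 ≥ (2a+1)·d5 + d8, d2 + d5 ≥ d1 + d6, and d3 + d6 ≥ 2·d2 + d8, then d1 = d2 = d3 = d5 = d8 = 0. -/
theorem stmt7 (a : ℤ) (ha : 1 ≤ a)
    (d1 d2 d3 d4 d5 d6 d7 d8 : ℝ)
    (h1 : 0 ≤ d1) (h2 : 0 ≤ d2) (h3 : 0 ≤ d3) (h4 : 0 ≤ d4)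
    (h5 : 0 ≤ d5) (h6 : 0 ≤ d6) (h7 : 0 ≤ d7) (h8 : 0 ≤ d8)
    (ha1 : d1 + d8 ≥ (a : ℝ) * d3 + d4)
    (ha2 : 2 * d4 + d6 ≥ (2 * (a : ℝ) + 1) * d5 + d8)
    (ha3 : d2 + d5 ≥ d1 + d6)
    (ha4 : d3 + d6 ≥ 2 * d2 + d8) :
    d1 = 0 ∧ d2 = 0 ∧ d3 = 0 ∧ d5 = 0 ∧ d8 = 0 := by
  have A : (1:ℝ) ≤ (a:ℝ) := by exact_mod_cast ha
  -- scaled inequalities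
  have s3 : (2*(a:ℝ)+1) * (d1 + d6) ≤ (2*(a:ℝ)+1) * (d2 + d5) :=
    mul_le_mul_of_nonneg_left ha3 (by linarith)
  have s4 : (2*(a:ℝ)) * (2*d2 + d8) ≤ (2*(a:ℝ)) * (d3 + d6) :=
    mul_le_mul_of_nonneg_left ha4 (by linarith)
  have key : (2*(a:ℝ)-1) * (d1 + d2 + d8) ≤ 0 := by nlinarith
  have hd1 : d1 = 0 := by nlinarith
  have hd2 : d2 = 0 := by nlinarith
  have hd8 : d8 = 0 := by nlinarith
  have hd3 : d3 = 0 := by nlinarith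
  have hd5 : d5 = 0 := by nlinarith
  exact ⟨hd1, hd2, hd3, hd5, hd8⟩
end

section
/- Let a be an integer with a ≤ -2. If d1, d2, d3, d4, d5, d6, d7, d8 are nonnegative real numbers satisfying d2 + d5 ≥ d1 + d6, d3 + d6 ≥ 2·d2 + d8, d2 + d4 ≥ -a·d3, and d1 + d8 ≥ d4 - a·d5, then d1 = d2 = d3 = d5 = d8 = 0. -/
theorem stmt8 (a : ℤ) (ha : a ≤ -2)
    (d1 d2 d3 d4 d5 d6 d7 d8 : ℝ)
    (h1 : 0 ≤ d1) (h2 : 0 ≤ d2) (h3 : 0 ≤ d3) (h4 : 0 ≤ d4)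
    (h5 : 0 ≤ d5) (h6 : 0 ≤ d6) (h7 : 0 ≤ d7) (h8 : 0 ≤ d8)
    (ha1 : d2 + d5 ≥ d1 + d6)
    (ha2 : d3 + d6 ≥ 2 * d2 + d8)
    (ha3 : d2 + d4 ≥ -(a : ℝ) * d3)
    (ha4 : d1 + d8 ≥ d4 - (a : ℝ) * d5) :
    d1 = 0 ∧ d2 = 0 ∧ d3 = 0 ∧ d5 = 0 ∧ d8 = 0 := by
  have hA : (a : ℝ) ≤ -2 := by exact_mod_cast ha
  have k3 : ((a : ℝ) + 2) * d3 ≤ 0 := mul_nonpos_of_nonpos_of_nonneg (by linarith) h3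
  have k5 : ((a : ℝ) + 2) * d5 ≤ 0 := mul_nonpos_of_nonpos_of_nonneg (by linarith) h5
  have h35 : d3 = 0 ∧ d5 = 0 := by constructor <;> nlinarith
  obtain ⟨e3, e5⟩ := h35
  subst e3; subst e5
  refine ⟨by linarith, by linarith, rfl, rfl, by linarith⟩
end

section
/- Fix an integer a with a ≠ 0 and a ≠ -1. Let v1=(1,0,0), v2=(0,1,0), v3=(0,0,1), v4=(0,-1,-a), v5=(0,0,-1), v6=(-1,1,-1), v7=(-1,0,-1), v8=(-1,-1,0) in ℝ³. Every point of ℝ³ lies in at least one of the 12 cones ⟨v1,v2,v3⟩, ⟨v1,v3,v4⟩, ⟨v1,v4,v5⟩, ⟨v1,v5,v6⟩, ⟨v1,v2,v6⟩, ⟨v2,v3,v8⟩, ⟨v3,v4,v8⟩, ⟨v4,v5,v8⟩, ⟨v5,v6,v7⟩, ⟨v5,v7,v8⟩, ⟨v6,v7,v8⟩, ⟨v2,v6,v8⟩. -/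
/-!
Each of the twelve cones is simplicial, so `x = (p, q, r)` lies in it exactly when its three
coordinates in the basis of the generators, which are linear forms in `p, q, r`, are nonnegative.
A case analysis on signs of such forms then places every point: for `p ≥ 0` the five cones around
`v₁` suffice; for `p ≤ 0` one uses `⟨v₃,v₄,v₈⟩` or `⟨v₄,v₅,v₈⟩` when `q ≤ p`, then `⟨v₂,v₃,v₈⟩`
when `r ≥ 0`, and otherwise the five cones around `v₆` together with `⟨v₅,v₇,v₈⟩`.
-/

theorem mem_cone3_of_coords {x : Fin 3 → ℝ} {u₀ u₁ u₂ v₀ v₁ v₂ w₀ w₁ w₂ α β γ : ℝ}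
    (hα : 0 ≤ α) (hβ : 0 ≤ β) (hγ : 0 ≤ γ) (h₀ : x 0 = α * u₀ + β * v₀ + γ * w₀)
    (h₁ : x 1 = α * u₁ + β * v₁ + γ * w₁) (h₂ : x 2 = α * u₂ + β * v₂ + γ * w₂) :
    x ∈ cone3 ![u₀, u₁, u₂] ![v₀, v₁, v₂] ![w₀, w₁, w₂] :=
  ⟨α, β, γ, hα, hβ, hγ, funext fun i => by fin_cases i <;> simp [h₀, h₁, h₂]⟩

/-! `mem_coneᵢⱼₖ` is membership in `⟨vᵢ, vⱼ, vₖ⟩`, the rays numbered as in the paper; its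
hypothesis `hᵢ` says that the `vᵢ`-coordinate of `x` is nonnegative. -/

section

variable {x : Fin 3 → ℝ}

theorem mem_cone₁₂₃ (h₁ : 0 ≤ x 0) (h₂ : 0 ≤ x 1) (h₃ : 0 ≤ x 2) :
    x ∈ cone3 ![1,0,0] ![0,1,0] ![0,0,1] :=
  mem_cone3_of_coords h₁ h₂ h₃ (by ring) (by ring) (by ring)

theorem mem_cone₁₃₄ (a : ℝ) (h₁ : 0 ≤ x 0) (h₃ : 0 ≤ x 2 - a * x 1) (h₄ : 0 ≤ -x 1) :
    x ∈ cone3 ![1,0,0] ![0,0,1] ![0,-1,-a] :=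
  mem_cone3_of_coords h₁ h₃ h₄ (by ring) (by ring) (by ring)

theorem mem_cone₁₄₅ (a : ℝ) (h₁ : 0 ≤ x 0) (h₄ : 0 ≤ -x 1) (h₅ : 0 ≤ a * x 1 - x 2) :
    x ∈ cone3 ![1,0,0] ![0,-1,-a] ![0,0,-1] :=
  mem_cone3_of_coords h₁ h₄ h₅ (by ring) (by ring) (by ring)

theorem mem_cone₁₅₆ (h₁ : 0 ≤ x 0 + x 1) (h₅ : 0 ≤ -x 2 - x 1) (h₆ : 0 ≤ x 1) :
    x ∈ cone3 ![1,0,0] ![0,0,-1] ![-1,1,-1] :=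
  mem_cone3_of_coords h₁ h₅ h₆ (by ring) (by ring) (by ring)

theorem mem_cone₁₂₆ (h₁ : 0 ≤ x 0 - x 2) (h₂ : 0 ≤ x 1 + x 2) (h₆ : 0 ≤ -x 2) :
    x ∈ cone3 ![1,0,0] ![0,1,0] ![-1,1,-1] :=
  mem_cone3_of_coords h₁ h₂ h₆ (by ring) (by ring) (by ring)

theorem mem_cone₂₃₈ (h₂ : 0 ≤ x 1 - x 0) (h₃ : 0 ≤ x 2) (h₈ : 0 ≤ -x 0) :
    x ∈ cone3 ![0,1,0] ![0,0,1] ![-1,-1,0] :=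
  mem_cone3_of_coords h₂ h₃ h₈ (by ring) (by ring) (by ring)

theorem mem_cone₃₄₈ (a : ℝ) (h₃ : 0 ≤ x 2 + a * (x 0 - x 1)) (h₄ : 0 ≤ x 0 - x 1)
    (h₈ : 0 ≤ -x 0) : x ∈ cone3 ![0,0,1] ![0,-1,-a] ![-1,-1,0] :=
  mem_cone3_of_coords h₃ h₄ h₈ (by ring) (by ring) (by ring)

theorem mem_cone₄₅₈ (a : ℝ) (h₄ : 0 ≤ x 0 - x 1) (h₅ : 0 ≤ -a * (x 0 - x 1) - x 2)
    (h₈ : 0 ≤ -x 0) : x ∈ cone3 ![0,-1,-a] ![0,0,-1] ![-1,-1,0] :=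
  mem_cone3_of_coords h₄ h₅ h₈ (by ring) (by ring) (by ring)

theorem mem_cone₅₆₇ (h₅ : 0 ≤ x 0 - x 2) (h₆ : 0 ≤ x 1) (h₇ : 0 ≤ -x 0 - x 1) :
    x ∈ cone3 ![0,0,-1] ![-1,1,-1] ![-1,0,-1] :=
  mem_cone3_of_coords h₅ h₆ h₇ (by ring) (by ring) (by ring)

theorem mem_cone₅₇₈ (h₅ : 0 ≤ x 0 - x 1 - x 2) (h₇ : 0 ≤ x 1 - x 0) (h₈ : 0 ≤ -x 1) :
    x ∈ cone3 ![0,0,-1] ![-1,0,-1] ![-1,-1,0] :=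
  mem_cone3_of_coords h₅ h₇ h₈ (by ring) (by ring) (by ring)

theorem mem_cone₆₇₈ (h₆ : 0 ≤ x 1 + x 2 - x 0) (h₇ : 0 ≤ x 0 - x 1 - 2 * x 2)
    (h₈ : 0 ≤ x 2 - x 0) : x ∈ cone3 ![-1,1,-1] ![-1,0,-1] ![-1,-1,0] :=
  mem_cone3_of_coords h₆ h₇ h₈ (by ring) (by ring) (by ring)

theorem mem_cone₂₆₈ (h₂ : 0 ≤ x 1 + 2 * x 2 - x 0) (h₆ : 0 ≤ -x 2) (h₈ : 0 ≤ x 2 - x 0) :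
    x ∈ cone3 ![0,1,0] ![-1,1,-1] ![-1,-1,0] :=
  mem_cone3_of_coords h₂ h₆ h₈ (by ring) (by ring) (by ring)

theorem mem_cones_around_v₁ (a : ℝ) (hp : 0 ≤ x 0) :
    x ∈ cone3 ![1,0,0] ![0,1,0] ![0,0,1] ∨ x ∈ cone3 ![1,0,0] ![0,0,1] ![0,-1,-a] ∨
      x ∈ cone3 ![1,0,0] ![0,-1,-a] ![0,0,-1] ∨ x ∈ cone3 ![1,0,0] ![0,0,-1] ![-1,1,-1] ∨
      x ∈ cone3 ![1,0,0] ![0,1,0] ![-1,1,-1] := by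
  rcases le_total 0 (x 1) with hq | hq
  · rcases le_total 0 (x 2) with hr | hr
    · exact .inl (mem_cone₁₂₃ hp hq hr)
    rcases le_total 0 (x 1 + x 2) with h | h
    · exact .inr <| .inr <| .inr <| .inr <| mem_cone₁₂₆ (by linarith) h (by linarith)
    · exact .inr <| .inr <| .inr <| .inl <| mem_cone₁₅₆ (by linarith) (by linarith) hq
  · rcases le_total (a * x 1) (x 2) with h | h
    · exact .inr <| .inl <| mem_cone₁₃₄ a hp (by linarith) (by linarith)
    · exact .inr <| .inr <| .inl <| mem_cone₁₄₅ a hp (by linarith) (by linarith)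

theorem mem_cones_around_v₆_or_cone₅₇₈ (hq : x 0 ≤ x 1) (hr : x 2 ≤ 0) :
    x ∈ cone3 ![1,0,0] ![0,0,-1] ![-1,1,-1] ∨ x ∈ cone3 ![0,0,-1] ![-1,1,-1] ![-1,0,-1] ∨
      x ∈ cone3 ![-1,1,-1] ![-1,0,-1] ![-1,-1,0] ∨ x ∈ cone3 ![0,1,0] ![-1,1,-1] ![-1,-1,0] ∨
      x ∈ cone3 ![1,0,0] ![0,1,0] ![-1,1,-1] ∨ x ∈ cone3 ![0,0,-1] ![-1,0,-1] ![-1,-1,0] := by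
  rcases le_total (x 0) (x 2) with hpr | hrp
  · rcases le_total (x 0 - 2 * x 2) (x 1) with h | h
    · exact .inr <| .inr <| .inr <| .inl <| mem_cone₂₆₈ (by linarith) (by linarith) (by linarith)
    rcases le_total (x 0) (x 1 + x 2) with h' | h'
    · exact .inr <| .inr <| .inl <| mem_cone₆₇₈ (by linarith) (by linarith) (by linarith)
    · exact .inr <| .inr <| .inr <| .inr <| .inr <|
        mem_cone₅₇₈ (by linarith) (by linarith) (by linarith)
  rcases le_total (x 1) 0 with hq₀ | hq₀
  · exact .inr <| .inr <| .inr <| .inr <| .inr <|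
      mem_cone₅₇₈ (by linarith) (by linarith) (by linarith)
  rcases le_total 0 (x 1 + x 2) with h | h
  · exact .inr <| .inr <| .inr <| .inr <| .inl <| mem_cone₁₂₆ (by linarith) h (by linarith)
  rcases le_total (x 0 + x 1) 0 with h' | h'
  · exact .inr <| .inl <| mem_cone₅₆₇ (by linarith) hq₀ (by linarith)
  · exact .inl <| mem_cone₁₅₆ (by linarith) (by linarith) hq₀

end

theorem stmt10_general (a : ℤ) : ∀ x : Fin 3 → ℝ,
      x ∈ cone3 ![1,0,0] ![0,1,0] ![0,0,1] ∨
      x ∈ cone3 ![1,0,0] ![0,0,1] ![0,-1,-(a:ℝ)] ∨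
      x ∈ cone3 ![1,0,0] ![0,-1,-(a:ℝ)] ![0,0,-1] ∨
      x ∈ cone3 ![1,0,0] ![0,0,-1] ![-1,1,-1] ∨
      x ∈ cone3 ![1,0,0] ![0,1,0] ![-1,1,-1] ∨
      x ∈ cone3 ![0,1,0] ![0,0,1] ![-1,-1,0] ∨
      x ∈ cone3 ![0,0,1] ![0,-1,-(a:ℝ)] ![-1,-1,0] ∨
      x ∈ cone3 ![0,-1,-(a:ℝ)] ![0,0,-1] ![-1,-1,0] ∨
      x ∈ cone3 ![0,0,-1] ![-1,1,-1] ![-1,0,-1] ∨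
      x ∈ cone3 ![0,0,-1] ![-1,0,-1] ![-1,-1,0] ∨
      x ∈ cone3 ![-1,1,-1] ![-1,0,-1] ![-1,-1,0] ∨
      x ∈ cone3 ![0,1,0] ![-1,1,-1] ![-1,-1,0] := by
  intro x
  rcases le_total 0 (x 0) with hp | hp
  · have := mem_cones_around_v₁ a hp
    tauto
  rcases le_total (x 1) (x 0) with hq | hq
  · have h₈ : 0 ≤ -x 0 := by linarith
    rcases le_total 0 (x 2 + a * (x 0 - x 1)) with h | h
    · have := mem_cone₃₄₈ a h (by linarith) h₈
      tauto
    · have := mem_cone₄₅₈ a (by linarith) (by linarith) h₈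
      tauto
  rcases le_total 0 (x 2) with hr | hr
  · have := mem_cone₂₃₈ (by linarith) hr (by linarith)
    tauto
  · have := mem_cones_around_v₆_or_cone₅₇₈ hq hr
    tauto

theorem stmt10 (a : ℤ) (ha0 : a ≠ 0) (ha1 : a ≠ -1) : ∀ x : Fin 3 → ℝ,
      x ∈ cone3 ![1,0,0] ![0,1,0] ![0,0,1] ∨
      x ∈ cone3 ![1,0,0] ![0,0,1] ![0,-1,-(a:ℝ)] ∨
      x ∈ cone3 ![1,0,0] ![0,-1,-(a:ℝ)] ![0,0,-1] ∨
      x ∈ cone3 ![1,0,0] ![0,0,-1] ![-1,1,-1] ∨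
      x ∈ cone3 ![1,0,0] ![0,1,0] ![-1,1,-1] ∨
      x ∈ cone3 ![0,1,0] ![0,0,1] ![-1,-1,0] ∨
      x ∈ cone3 ![0,0,1] ![0,-1,-(a:ℝ)] ![-1,-1,0] ∨
      x ∈ cone3 ![0,-1,-(a:ℝ)] ![0,0,-1] ![-1,-1,0] ∨
      x ∈ cone3 ![0,0,-1] ![-1,1,-1] ![-1,0,-1] ∨
      x ∈ cone3 ![0,0,-1] ![-1,0,-1] ![-1,-1,0] ∨
      x ∈ cone3 ![-1,1,-1] ![-1,0,-1] ![-1,-1,0] ∨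
      x ∈ cone3 ![0,1,0] ![-1,1,-1] ![-1,-1,0] :=
  stmt10_general a
end

section
/- Let a and b be integers with a ≥ 1, b ≥ 1, and (a,b) ≠ (1,1). If d1, d2, d3, d4, d5, d6, d7, d8 are nonnegative real numbers satisfying d3 + d6 ≥ a·d5 + d8, d2 + d8 ≥ d3 + a·d7, d1 + d5 ≥ b·d6 + d4, d4 + d7 ≥ d1 + b·d2, and d2 + d5 ≥ d3 + d4, then d2 = d3 = d4 = d5 = d6 = d7 = 0. -/
theorem stmt12 (a b : ℤ) (ha : 1 ≤ a) (hb : 1 ≤ b) (hab : (a, b) ≠ (1, 1))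
    (d1 d2 d3 d4 d5 d6 d7 d8 : ℝ)
    (h1 : 0 ≤ d1) (h2 : 0 ≤ d2) (h3 : 0 ≤ d3) (h4 : 0 ≤ d4)
    (h5 : 0 ≤ d5) (h6 : 0 ≤ d6) (h7 : 0 ≤ d7) (h8 : 0 ≤ d8)
    (ha1 : d3 + d6 ≥ (a : ℝ) * d5 + d8)
    (ha2 : d2 + d8 ≥ d3 + (a : ℝ) * d7)
    (ha3 : d1 + d5 ≥ (b : ℝ) * d6 + d4)
    (ha4 : d4 + d7 ≥ d1 + (b : ℝ) * d2)
    (ha5 : d2 + d5 ≥ d3 + d4) :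
    d2 = 0 ∧ d3 = 0 ∧ d4 = 0 ∧ d5 = 0 ∧ d6 = 0 ∧ d7 = 0 := by
  have hab' : a ≠ 1 ∨ b ≠ 1 := by
    by_contra h; push_neg at h; exact hab (by simp [h.1, h.2])
  have h2ab : (2 : ℤ) ≤ a * b := by
    rcases hab' with h | h
    · have : 2 ≤ a := lt_of_le_of_ne ha (Ne.symm h)
      nlinarith
    · have : 2 ≤ b := lt_of_le_of_ne hb (Ne.symm h)
      nlinarith
  have h2ab' : (2 : ℝ) ≤ (a : ℝ) * (b : ℝ) := by exact_mod_cast h2ab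
  have ha' : (1 : ℝ) ≤ (a : ℝ) := by exact_mod_cast ha
  have hb' : (1 : ℝ) ≤ (b : ℝ) := by exact_mod_cast hb
  -- T = d2 + d6, S = d5 + d7
  have hTS : d2 + d6 ≥ (a : ℝ) * (d5 + d7) := by nlinarith
  have hST : d5 + d7 ≥ (b : ℝ) * (d2 + d6) := by nlinarith
  have hT : d2 + d6 ≤ 0 := by nlinarith [mul_nonneg (le_trans zero_le_one ha') (add_nonneg h5 h7)]
  have hT0 : d2 + d6 = 0 := le_antisymm hT (add_nonneg h2 h6)
  have hd2 : d2 = 0 := by linarith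
  have hd6 : d6 = 0 := by linarith
  have hS0 : d5 + d7 = 0 := by nlinarith
  have hd5 : d5 = 0 := by linarith
  have hd7 : d7 = 0 := by linarith
  have hd3 : d3 = 0 := by nlinarith
  have hd4 : d4 = 0 := by nlinarith
  exact ⟨hd2, hd3, hd4, hd5, hd6, hd7⟩
end

section
/- Let a and b be nonzero integers such that not both |a| = 1 and |b| = 1. If d1, d2, d3, d4, d5, d6, d7, d8 are nonnegative real numbers satisfying d3 + d6 ≥ a·d5 + d8, d2 + d8 ≥ d3 + a·d7, d1 + d5 ≥ b·d6 + d4, d4 + d7 ≥ d1 + b·d2, d2 + d5 ≥ d3 + d4, d3 + d6 ≥ -a·d7 + d8, d4 + d8 ≥ (1-a)·d5, d4 + d7 ≥ d1 - b·d6, and d1 + d3 ≥ (1-b)·d2, then d2 = d3 = d4 = d5 = d6 = d7 = 0. -/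
theorem stmt13 (a b : ℤ) (ha : a ≠ 0) (hb : b ≠ 0) (hab : ¬(|a| = 1 ∧ |b| = 1))
    (d1 d2 d3 d4 d5 d6 d7 d8 : ℝ)
    (h1 : 0 ≤ d1) (h2 : 0 ≤ d2) (h3 : 0 ≤ d3) (h4 : 0 ≤ d4)
    (h5 : 0 ≤ d5) (h6 : 0 ≤ d6) (h7 : 0 ≤ d7) (h8 : 0 ≤ d8)
    (ha1 : d3 + d6 ≥ (a : ℝ) * d5 + d8)
    (ha2 : d2 + d8 ≥ d3 + (a : ℝ) * d7)
    (ha3 : d1 + d5 ≥ (b : ℝ) * d6 + d4)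
    (ha4 : d4 + d7 ≥ d1 + (b : ℝ) * d2)
    (ha5 : d2 + d5 ≥ d3 + d4)
    (ha6 : d3 + d6 ≥ -(a : ℝ) * d7 + d8)
    (ha7 : d4 + d8 ≥ (1 - (a : ℝ)) * d5)
    (ha8 : d4 + d7 ≥ d1 - (b : ℝ) * d6)
    (ha9 : d1 + d3 ≥ (1 - (b : ℝ)) * d2) :
    d2 = 0 ∧ d3 = 0 ∧ d4 = 0 ∧ d5 = 0 ∧ d6 = 0 ∧ d7 = 0 := by
  have h1a : (1:ℤ) ≤ |a| := Int.one_le_abs ha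
  have h1b : (1:ℤ) ≤ |b| := Int.one_le_abs hb
  have habs : (2:ℤ) ≤ |a| * |b| := by
    by_cases hA1 : |a| = 1
    · have hb1 : |b| ≠ 1 := fun h => hab ⟨hA1, h⟩
      have : 2 ≤ |b| := by omega
      nlinarith
    · have : 2 ≤ |a| := by omega
      nlinarith
  have hAr : (1:ℝ) ≤ |(a:ℝ)| := by
    rw [← Int.cast_abs]; exact_mod_cast h1a
  have hBr : (1:ℝ) ≤ |(b:ℝ)| := by
    rw [← Int.cast_abs]; exact_mod_cast h1b
  have hAB : (2:ℝ) ≤ |(a:ℝ)| * |(b:ℝ)| := by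
    rw [← Int.cast_abs, ← Int.cast_abs, ← Int.cast_mul]; exact_mod_cast habs
  obtain ⟨A, hAdef⟩ : ∃ A : ℝ, A = |(a:ℝ)| := ⟨_, rfl⟩
  obtain ⟨B, hBdef⟩ : ∃ B : ℝ, B = |(b:ℝ)| := ⟨_, rfl⟩
  rw [← hAdef] at hAr
  rw [← hBdef] at hBr
  rw [← hAdef, ← hBdef] at hAB
  have hX : A * (d5 + d7) ≤ d2 + d6 := by
    rw [hAdef]
    rcases lt_or_gt_of_ne ha with hneg | hpos
    · have har : (a:ℝ) < 0 := by exact_mod_cast hneg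
      rw [abs_of_neg har]
      have e : -(a:ℝ) * (d5 + d7) = -(a:ℝ) * d7 + (1 - (a:ℝ)) * d5 - d5 := by ring
      linarith
    · have har : (0:ℝ) < (a:ℝ) := by exact_mod_cast hpos
      rw [abs_of_pos har]
      have e : (a:ℝ) * (d5 + d7) = (a:ℝ) * d5 + (a:ℝ) * d7 := by ring
      linarith
  have hY : B * (d2 + d6) ≤ d5 + d7 := by
    rw [hBdef]
    rcases lt_or_gt_of_ne hb with hneg | hpos
    · have hbr : (b:ℝ) < 0 := by exact_mod_cast hneg
      rw [abs_of_neg hbr]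
      have e : -(b:ℝ) * (d2 + d6) = (1 - (b:ℝ)) * d2 - d2 - (b:ℝ) * d6 := by ring
      linarith
    · have hbr : (0:ℝ) < (b:ℝ) := by exact_mod_cast hpos
      rw [abs_of_pos hbr]
      have e : (b:ℝ) * (d2 + d6) = (b:ℝ) * d2 + (b:ℝ) * d6 := by ring
      linarith
  have hXn : 0 ≤ d2 + d6 := by linarith
  have hYn : 0 ≤ d5 + d7 := by linarith
  have hA0 : (0:ℝ) ≤ A := by linarith
  have key : A * (B * (d2 + d6)) ≤ A * (d5 + d7) :=
    mul_le_mul_of_nonneg_left hY hA0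
  have hX0 : d2 + d6 ≤ 0 := by
    have hm : 0 ≤ (A * B - 2) * (d2 + d6) :=
      mul_nonneg (by linarith) hXn
    have e : (A * B - 2) * (d2 + d6) = A * (B * (d2 + d6)) - 2 * (d2 + d6) := by ring
    linarith
  have hd2 : d2 = 0 := by linarith
  have hd6 : d6 = 0 := by linarith
  have hY0 : d5 + d7 ≤ 0 := by
    have hm := mul_le_mul_of_nonneg_right hAr hYn
    have e : (1:ℝ) * (d5 + d7) = d5 + d7 := by ring
    linarith
  have hd5 : d5 = 0 := by linarith
  have hd7 : d7 = 0 := by linarith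
  exact ⟨hd2, by linarith, by linarith, hd5, hd6, hd7⟩
end

section
/- Let v1=(0,1,0), v2=(0,-1,-1), v3=(1,0,0), v4=(0,0,1), v5=(-1,0,-1), v6=(-1,-2,-2), v7=(-1,-1,-1), v8=(-1,-1,0) in ℝ³. For each of the 12 cones ⟨v1,v2,v3⟩, ⟨v1,v3,v4⟩, ⟨v1,v4,v5⟩, ⟨v1,v5,v6⟩, ⟨v1,v2,v6⟩, ⟨v2,v3,v8⟩, ⟨v3,v4,v8⟩, ⟨v4,v5,v8⟩, ⟨v5,v6,v7⟩, ⟨v5,v7,v8⟩, ⟨v6,v7,v8⟩, ⟨v2,v6,v8⟩, there exist three vectors among {v1, v3, v4, v7} whose cone contains that cone. -/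
lemma cone3_subset {a b c u v w : Fin 3 → ℝ} (ha : a ∈ cone3 u v w)
    (hb : b ∈ cone3 u v w) (hc : c ∈ cone3 u v w) : cone3 a b c ⊆ cone3 u v w := by
  rintro x ⟨α, β, γ, hα, hβ, hγ, rfl⟩
  obtain ⟨a1, a2, a3, ha1, ha2, ha3, rfl⟩ := ha
  obtain ⟨b1, b2, b3, hb1, hb2, hb3, rfl⟩ := hb
  obtain ⟨c1, c2, c3, hc1, hc2, hc3, rfl⟩ := hc
  exact ⟨α*a1+β*b1+γ*c1, α*a2+β*b2+γ*c2, α*a3+β*b3+γ*c3,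
    by positivity, by positivity, by positivity, by module⟩

lemma memc {u v w x : Fin 3 → ℝ} (α β γ : ℝ) (hα : 0 ≤ α) (hβ : 0 ≤ β) (hγ : 0 ≤ γ)
    (h : x = α • u + β • v + γ • w) : x ∈ cone3 u v w := ⟨α, β, γ, hα, hβ, hγ, h⟩

theorem stmt17 :
    (∃ u v w : Fin 3 → ℝ, u ∈ ({![0,1,0], ![1,0,0], ![0,0,1], ![-1,-1,-1]} : Set (Fin 3 → ℝ)) ∧ v ∈ ({![0,1,0], ![1,0,0], ![0,0,1], ![-1,-1,-1]} : Set (Fin 3 → ℝ)) ∧ w ∈ ({![0,1,0], ![1,0,0], ![0,0,1], ![-1,-1,-1]} : Set (Fin 3 → ℝ)) ∧ cone3 ![0,1,0] ![0,-1,-1] ![1,0,0] ⊆ cone3 u v w) ∧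
    (∃ u v w : Fin 3 → ℝ, u ∈ ({![0,1,0], ![1,0,0], ![0,0,1], ![-1,-1,-1]} : Set (Fin 3 → ℝ)) ∧ v ∈ ({![0,1,0], ![1,0,0], ![0,0,1], ![-1,-1,-1]} : Set (Fin 3 → ℝ)) ∧ w ∈ ({![0,1,0], ![1,0,0], ![0,0,1], ![-1,-1,-1]} : Set (Fin 3 → ℝ)) ∧ cone3 ![0,1,0] ![1,0,0] ![0,0,1] ⊆ cone3 u v w) ∧
    (∃ u v w : Fin 3 → ℝ, u ∈ ({![0,1,0], ![1,0,0], ![0,0,1], ![-1,-1,-1]} : Set (Fin 3 → ℝ)) ∧ v ∈ ({![0,1,0], ![1,0,0], ![0,0,1], ![-1,-1,-1]} : Set (Fin 3 → ℝ)) ∧ w ∈ ({![0,1,0], ![1,0,0], ![0,0,1], ![-1,-1,-1]} : Set (Fin 3 → ℝ)) ∧ cone3 ![0,1,0] ![0,0,1] ![-1,0,-1] ⊆ cone3 u v w) ∧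
    (∃ u v w : Fin 3 → ℝ, u ∈ ({![0,1,0], ![1,0,0], ![0,0,1], ![-1,-1,-1]} : Set (Fin 3 → ℝ)) ∧ v ∈ ({![0,1,0], ![1,0,0], ![0,0,1], ![-1,-1,-1]} : Set (Fin 3 → ℝ)) ∧ w ∈ ({![0,1,0], ![1,0,0], ![0,0,1], ![-1,-1,-1]} : Set (Fin 3 → ℝ)) ∧ cone3 ![0,1,0] ![-1,0,-1] ![-1,-2,-2] ⊆ cone3 u v w) ∧
    (∃ u v w : Fin 3 → ℝ, u ∈ ({![0,1,0], ![1,0,0], ![0,0,1], ![-1,-1,-1]} : Set (Fin 3 → ℝ)) ∧ v ∈ ({![0,1,0], ![1,0,0], ![0,0,1], ![-1,-1,-1]} : Set (Fin 3 → ℝ)) ∧ w ∈ ({![0,1,0], ![1,0,0], ![0,0,1], ![-1,-1,-1]} : Set (Fin 3 → ℝ)) ∧ cone3 ![0,1,0] ![0,-1,-1] ![-1,-2,-2] ⊆ cone3 u v w) ∧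
    (∃ u v w : Fin 3 → ℝ, u ∈ ({![0,1,0], ![1,0,0], ![0,0,1], ![-1,-1,-1]} : Set (Fin 3 → ℝ)) ∧ v ∈ ({![0,1,0], ![1,0,0], ![0,0,1], ![-1,-1,-1]} : Set (Fin 3 → ℝ)) ∧ w ∈ ({![0,1,0], ![1,0,0], ![0,0,1], ![-1,-1,-1]} : Set (Fin 3 → ℝ)) ∧ cone3 ![0,-1,-1] ![1,0,0] ![-1,-1,0] ⊆ cone3 u v w) ∧
    (∃ u v w : Fin 3 → ℝ, u ∈ ({![0,1,0], ![1,0,0], ![0,0,1], ![-1,-1,-1]} : Set (Fin 3 → ℝ)) ∧ v ∈ ({![0,1,0], ![1,0,0], ![0,0,1], ![-1,-1,-1]} : Set (Fin 3 → ℝ)) ∧ w ∈ ({![0,1,0], ![1,0,0], ![0,0,1], ![-1,-1,-1]} : Set (Fin 3 → ℝ)) ∧ cone3 ![1,0,0] ![0,0,1] ![-1,-1,0] ⊆ cone3 u v w) ∧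
    (∃ u v w : Fin 3 → ℝ, u ∈ ({![0,1,0], ![1,0,0], ![0,0,1], ![-1,-1,-1]} : Set (Fin 3 → ℝ)) ∧ v ∈ ({![0,1,0], ![1,0,0], ![0,0,1], ![-1,-1,-1]} : Set (Fin 3 → ℝ)) ∧ w ∈ ({![0,1,0], ![1,0,0], ![0,0,1], ![-1,-1,-1]} : Set (Fin 3 → ℝ)) ∧ cone3 ![0,0,1] ![-1,0,-1] ![-1,-1,0] ⊆ cone3 u v w) ∧
    (∃ u v w : Fin 3 → ℝ, u ∈ ({![0,1,0], ![1,0,0], ![0,0,1], ![-1,-1,-1]} : Set (Fin 3 → ℝ)) ∧ v ∈ ({![0,1,0], ![1,0,0], ![0,0,1], ![-1,-1,-1]} : Set (Fin 3 → ℝ)) ∧ w ∈ ({![0,1,0], ![1,0,0], ![0,0,1], ![-1,-1,-1]} : Set (Fin 3 → ℝ)) ∧ cone3 ![-1,0,-1] ![-1,-2,-2] ![-1,-1,-1] ⊆ cone3 u v w) ∧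
    (∃ u v w : Fin 3 → ℝ, u ∈ ({![0,1,0], ![1,0,0], ![0,0,1], ![-1,-1,-1]} : Set (Fin 3 → ℝ)) ∧ v ∈ ({![0,1,0], ![1,0,0], ![0,0,1], ![-1,-1,-1]} : Set (Fin 3 → ℝ)) ∧ w ∈ ({![0,1,0], ![1,0,0], ![0,0,1], ![-1,-1,-1]} : Set (Fin 3 → ℝ)) ∧ cone3 ![-1,0,-1] ![-1,-1,-1] ![-1,-1,0] ⊆ cone3 u v w) ∧
    (∃ u v w : Fin 3 → ℝ, u ∈ ({![0,1,0], ![1,0,0], ![0,0,1], ![-1,-1,-1]} : Set (Fin 3 → ℝ)) ∧ v ∈ ({![0,1,0], ![1,0,0], ![0,0,1], ![-1,-1,-1]} : Set (Fin 3 → ℝ)) ∧ w ∈ ({![0,1,0], ![1,0,0], ![0,0,1], ![-1,-1,-1]} : Set (Fin 3 → ℝ)) ∧ cone3 ![-1,-2,-2] ![-1,-1,-1] ![-1,-1,0] ⊆ cone3 u v w) ∧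
    (∃ u v w : Fin 3 → ℝ, u ∈ ({![0,1,0], ![1,0,0], ![0,0,1], ![-1,-1,-1]} : Set (Fin 3 → ℝ)) ∧ v ∈ ({![0,1,0], ![1,0,0], ![0,0,1], ![-1,-1,-1]} : Set (Fin 3 → ℝ)) ∧ w ∈ ({![0,1,0], ![1,0,0], ![0,0,1], ![-1,-1,-1]} : Set (Fin 3 → ℝ)) ∧ cone3 ![0,-1,-1] ![-1,-2,-2] ![-1,-1,0] ⊆ cone3 u v w) := by
  have m1 : (![0,1,0] : Fin 3 → ℝ) ∈ ({![0,1,0], ![1,0,0], ![0,0,1], ![-1,-1,-1]} : Set (Fin 3 → ℝ)) := by left; rfl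
  have m3 : (![1,0,0] : Fin 3 → ℝ) ∈ ({![0,1,0], ![1,0,0], ![0,0,1], ![-1,-1,-1]} : Set (Fin 3 → ℝ)) := by right; left; rfl
  have m4 : (![0,0,1] : Fin 3 → ℝ) ∈ ({![0,1,0], ![1,0,0], ![0,0,1], ![-1,-1,-1]} : Set (Fin 3 → ℝ)) := by right; right; left; rfl
  have m7 : (![-1,-1,-1] : Fin 3 → ℝ) ∈ ({![0,1,0], ![1,0,0], ![0,0,1], ![-1,-1,-1]} : Set (Fin 3 → ℝ)) := by right; right; right; rfl
  -- memberships in cone3 v1 v3 v7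
  have h1_137 : (![0,1,0] : Fin 3 → ℝ) ∈ cone3 ![0,1,0] ![1,0,0] ![-1,-1,-1] :=
    memc 1 0 0 (by norm_num) le_rfl le_rfl (by funext i; fin_cases i <;> norm_num)
  have h3_137 : (![1,0,0] : Fin 3 → ℝ) ∈ cone3 ![0,1,0] ![1,0,0] ![-1,-1,-1] :=
    memc 0 1 0 le_rfl (by norm_num) le_rfl (by funext i; fin_cases i <;> norm_num)
  have h7_137 : (![-1,-1,-1] : Fin 3 → ℝ) ∈ cone3 ![0,1,0] ![1,0,0] ![-1,-1,-1] :=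
    memc 0 0 1 le_rfl le_rfl (by norm_num) (by funext i; fin_cases i <;> norm_num)
  have h2_137 : (![0,-1,-1] : Fin 3 → ℝ) ∈ cone3 ![0,1,0] ![1,0,0] ![-1,-1,-1] :=
    memc 0 1 1 le_rfl (by norm_num) (by norm_num) (by funext i; fin_cases i <;> norm_num)
  have h5_137 : (![-1,0,-1] : Fin 3 → ℝ) ∈ cone3 ![0,1,0] ![1,0,0] ![-1,-1,-1] :=
    memc 1 0 1 (by norm_num) le_rfl (by norm_num) (by funext i; fin_cases i <;> norm_num)
  have h6_137 : (![-1,-2,-2] : Fin 3 → ℝ) ∈ cone3 ![0,1,0] ![1,0,0] ![-1,-1,-1] :=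
    memc 0 1 2 le_rfl (by norm_num) (by norm_num) (by funext i; fin_cases i <;> norm_num)
  -- memberships in cone3 v1 v4 v7
  have h1_147 : (![0,1,0] : Fin 3 → ℝ) ∈ cone3 ![0,1,0] ![0,0,1] ![-1,-1,-1] :=
    memc 1 0 0 (by norm_num) le_rfl le_rfl (by funext i; fin_cases i <;> norm_num)
  have h4_147 : (![0,0,1] : Fin 3 → ℝ) ∈ cone3 ![0,1,0] ![0,0,1] ![-1,-1,-1] :=
    memc 0 1 0 le_rfl (by norm_num) le_rfl (by funext i; fin_cases i <;> norm_num)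
  have h7_147 : (![-1,-1,-1] : Fin 3 → ℝ) ∈ cone3 ![0,1,0] ![0,0,1] ![-1,-1,-1] :=
    memc 0 0 1 le_rfl le_rfl (by norm_num) (by funext i; fin_cases i <;> norm_num)
  have h5_147 : (![-1,0,-1] : Fin 3 → ℝ) ∈ cone3 ![0,1,0] ![0,0,1] ![-1,-1,-1] :=
    memc 1 0 1 (by norm_num) le_rfl (by norm_num) (by funext i; fin_cases i <;> norm_num)
  have h8_147 : (![-1,-1,0] : Fin 3 → ℝ) ∈ cone3 ![0,1,0] ![0,0,1] ![-1,-1,-1] :=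
    memc 0 1 1 le_rfl (by norm_num) (by norm_num) (by funext i; fin_cases i <;> norm_num)
  -- memberships in cone3 v3 v4 v7
  have h3_347 : (![1,0,0] : Fin 3 → ℝ) ∈ cone3 ![1,0,0] ![0,0,1] ![-1,-1,-1] :=
    memc 1 0 0 (by norm_num) le_rfl le_rfl (by funext i; fin_cases i <;> norm_num)
  have h4_347 : (![0,0,1] : Fin 3 → ℝ) ∈ cone3 ![1,0,0] ![0,0,1] ![-1,-1,-1] :=
    memc 0 1 0 le_rfl (by norm_num) le_rfl (by funext i; fin_cases i <;> norm_num)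
  have h7_347 : (![-1,-1,-1] : Fin 3 → ℝ) ∈ cone3 ![1,0,0] ![0,0,1] ![-1,-1,-1] :=
    memc 0 0 1 le_rfl le_rfl (by norm_num) (by funext i; fin_cases i <;> norm_num)
  have h2_347 : (![0,-1,-1] : Fin 3 → ℝ) ∈ cone3 ![1,0,0] ![0,0,1] ![-1,-1,-1] :=
    memc 1 0 1 (by norm_num) le_rfl (by norm_num) (by funext i; fin_cases i <;> norm_num)
  have h8_347 : (![-1,-1,0] : Fin 3 → ℝ) ∈ cone3 ![1,0,0] ![0,0,1] ![-1,-1,-1] :=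
    memc 0 1 1 le_rfl (by norm_num) (by norm_num) (by funext i; fin_cases i <;> norm_num)
  have h6_347 : (![-1,-2,-2] : Fin 3 → ℝ) ∈ cone3 ![1,0,0] ![0,0,1] ![-1,-1,-1] :=
    memc 1 0 2 (by norm_num) le_rfl (by norm_num) (by funext i; fin_cases i <;> norm_num)
  -- memberships in cone3 v1 v3 v4
  have h1_134 : (![0,1,0] : Fin 3 → ℝ) ∈ cone3 ![0,1,0] ![1,0,0] ![0,0,1] :=
    memc 1 0 0 (by norm_num) le_rfl le_rfl (by funext i; fin_cases i <;> norm_num)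
  have h3_134 : (![1,0,0] : Fin 3 → ℝ) ∈ cone3 ![0,1,0] ![1,0,0] ![0,0,1] :=
    memc 0 1 0 le_rfl (by norm_num) le_rfl (by funext i; fin_cases i <;> norm_num)
  have h4_134 : (![0,0,1] : Fin 3 → ℝ) ∈ cone3 ![0,1,0] ![1,0,0] ![0,0,1] :=
    memc 0 0 1 le_rfl le_rfl (by norm_num) (by funext i; fin_cases i <;> norm_num)
  refine ⟨⟨_, _, _, m1, m3, m7, cone3_subset h1_137 h2_137 h3_137⟩,
    ⟨_, _, _, m1, m3, m4, cone3_subset h1_134 h3_134 h4_134⟩,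
    ⟨_, _, _, m1, m4, m7, cone3_subset h1_147 h4_147 h5_147⟩,
    ⟨_, _, _, m1, m3, m7, cone3_subset h1_137 h5_137 h6_137⟩,
    ⟨_, _, _, m1, m3, m7, cone3_subset h1_137 h2_137 h6_137⟩,
    ⟨_, _, _, m3, m4, m7, cone3_subset h2_347 h3_347 h8_347⟩,
    ⟨_, _, _, m3, m4, m7, cone3_subset h3_347 h4_347 h8_347⟩,
    ⟨_, _, _, m1, m4, m7, cone3_subset h4_147 h5_147 h8_147⟩,
    ⟨_, _, _, m1, m3, m7, cone3_subset h5_137 h6_137 h7_137⟩,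
    ⟨_, _, _, m1, m4, m7, cone3_subset h5_147 h7_147 h8_147⟩,
    ⟨_, _, _, m3, m4, m7, cone3_subset h6_347 h7_347 h8_347⟩,
    ⟨_, _, _, m3, m4, m7, cone3_subset h2_347 h6_347 h8_347⟩⟩
end

section
/- Fix integers a and b. Let v1=(1,0,0), v2=(0,-1,0), v3=(0,0,1), v4=(1,1,a), v5=(0,0,-1), v6=(0,-1,-1), v7=(-1,-2,-1), v8=(0,1,b) in ℝ³, and let π : ℝ³ → ℝ² be the projection π(x,y,z) = (x,y). For each of the 12 triples (v1,v2,v3), (v1,v3,v4), (v1,v4,v5), (v1,v5,v6), (v1,v6,v7), (v1,v2,v7), (v2,v3,v7), (v5,v6,v7), (v3,v4,v8), (v4,v5,v8), (v5,v7,v8), (v3,v7,v8), there exists one of the four planar cones ⟨(1,0),(1,1)⟩, ⟨(1,1),(0,1)⟩, ⟨(0,1),(-1,-2)⟩, ⟨(-1,-2),(1,0)⟩ containing the images under π of all three vectors of the triple. -/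
def cone2 (u v : Fin 2 → ℝ) : Set (Fin 2 → ℝ) :=
  {x | ∃ α β : ℝ, 0 ≤ α ∧ 0 ≤ β ∧ x = α • u + β • v}

def proj (x : Fin 3 → ℝ) : Fin 2 → ℝ := ![x 0, x 1]


private lemma memc_s19 {u v x : Fin 2 → ℝ} (α β : ℝ) (ha : 0 ≤ α) (hb : 0 ≤ β)
    (h : x = α • u + β • v) : x ∈ cone2 u v := ⟨α, β, ha, hb, h⟩

private lemma p10C1 : proj ![1,0,0] ∈ cone2 ![1,0] ![1,1] :=
  memc_s19 1 0 (by norm_num) (by norm_num) (by funext i; fin_cases i <;> simp [proj])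
private lemma p10C4 : proj ![1,0,0] ∈ cone2 ![-1,-2] ![1,0] :=
  memc_s19 0 1 (by norm_num) (by norm_num) (by funext i; fin_cases i <;> simp [proj])
private lemma p0m1C4 : proj ![0,-1,0] ∈ cone2 ![-1,-2] ![1,0] :=
  memc_s19 (1/2) (1/2) (by norm_num) (by norm_num) (by funext i; fin_cases i <;> simp [proj] <;> norm_num)
private lemma zC1 : proj ![0,0,(1:ℝ)] ∈ cone2 ![1,0] ![1,1] :=
  memc_s19 0 0 le_rfl le_rfl (by funext i; fin_cases i <;> simp [proj])
private lemma zC2 : proj ![0,0,(1:ℝ)] ∈ cone2 ![1,1] ![0,1] :=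
  memc_s19 0 0 le_rfl le_rfl (by funext i; fin_cases i <;> simp [proj])
private lemma zC3 : proj ![0,0,(1:ℝ)] ∈ cone2 ![0,1] ![-1,-2] :=
  memc_s19 0 0 le_rfl le_rfl (by funext i; fin_cases i <;> simp [proj])
private lemma zC4 : proj ![0,0,(1:ℝ)] ∈ cone2 ![-1,-2] ![1,0] :=
  memc_s19 0 0 le_rfl le_rfl (by funext i; fin_cases i <;> simp [proj])
private lemma zC1' : proj ![0,0,(-1:ℝ)] ∈ cone2 ![1,0] ![1,1] :=
  memc_s19 0 0 le_rfl le_rfl (by funext i; fin_cases i <;> simp [proj])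
private lemma zC2' : proj ![0,0,(-1:ℝ)] ∈ cone2 ![1,1] ![0,1] :=
  memc_s19 0 0 le_rfl le_rfl (by funext i; fin_cases i <;> simp [proj])
private lemma zC3' : proj ![0,0,(-1:ℝ)] ∈ cone2 ![0,1] ![-1,-2] :=
  memc_s19 0 0 le_rfl le_rfl (by funext i; fin_cases i <;> simp [proj])
private lemma zC4' : proj ![0,0,(-1:ℝ)] ∈ cone2 ![-1,-2] ![1,0] :=
  memc_s19 0 0 le_rfl le_rfl (by funext i; fin_cases i <;> simp [proj])
private lemma p11C1 (a : ℝ) : proj ![1,1,a] ∈ cone2 ![1,0] ![1,1] :=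
  memc_s19 0 1 (by norm_num) (by norm_num) (by funext i; fin_cases i <;> simp [proj])
private lemma p11C2 (a : ℝ) : proj ![1,1,a] ∈ cone2 ![1,1] ![0,1] :=
  memc_s19 1 0 (by norm_num) (by norm_num) (by funext i; fin_cases i <;> simp [proj])
private lemma p66C4 : proj ![0,-1,-1] ∈ cone2 ![-1,-2] ![1,0] :=
  memc_s19 (1/2) (1/2) (by norm_num) (by norm_num) (by funext i; fin_cases i <;> simp [proj] <;> norm_num)
private lemma p7C4 : proj ![-1,-2,-1] ∈ cone2 ![-1,-2] ![1,0] :=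
  memc_s19 1 0 (by norm_num) (by norm_num) (by funext i; fin_cases i <;> simp [proj])
private lemma p7C3 : proj ![-1,-2,-1] ∈ cone2 ![0,1] ![-1,-2] :=
  memc_s19 0 1 (by norm_num) (by norm_num) (by funext i; fin_cases i <;> simp [proj])
private lemma p8C2 (b : ℝ) : proj ![0,1,b] ∈ cone2 ![1,1] ![0,1] :=
  memc_s19 0 1 (by norm_num) (by norm_num) (by funext i; fin_cases i <;> simp [proj])
private lemma p8C3 (b : ℝ) : proj ![0,1,b] ∈ cone2 ![0,1] ![-1,-2] :=
  memc_s19 1 0 (by norm_num) (by norm_num) (by funext i; fin_cases i <;> simp [proj])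

theorem stmt19 (a b : ℤ) :
    (∃ C ∈ ({cone2 ![1,0] ![1,1], cone2 ![1,1] ![0,1], cone2 ![0,1] ![-1,-2], cone2 ![-1,-2] ![1,0]} : Set (Set (Fin 2 → ℝ))), proj ![1,0,0] ∈ C ∧ proj ![0,-1,0] ∈ C ∧ proj ![0,0,1] ∈ C) ∧
    (∃ C ∈ ({cone2 ![1,0] ![1,1], cone2 ![1,1] ![0,1], cone2 ![0,1] ![-1,-2], cone2 ![-1,-2] ![1,0]} : Set (Set (Fin 2 → ℝ))), proj ![1,0,0] ∈ C ∧ proj ![0,0,1] ∈ C ∧ proj ![1,1,(a:ℝ)] ∈ C) ∧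
    (∃ C ∈ ({cone2 ![1,0] ![1,1], cone2 ![1,1] ![0,1], cone2 ![0,1] ![-1,-2], cone2 ![-1,-2] ![1,0]} : Set (Set (Fin 2 → ℝ))), proj ![1,0,0] ∈ C ∧ proj ![1,1,(a:ℝ)] ∈ C ∧ proj ![0,0,-1] ∈ C) ∧
    (∃ C ∈ ({cone2 ![1,0] ![1,1], cone2 ![1,1] ![0,1], cone2 ![0,1] ![-1,-2], cone2 ![-1,-2] ![1,0]} : Set (Set (Fin 2 → ℝ))), proj ![1,0,0] ∈ C ∧ proj ![0,0,-1] ∈ C ∧ proj ![0,-1,-1] ∈ C) ∧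
    (∃ C ∈ ({cone2 ![1,0] ![1,1], cone2 ![1,1] ![0,1], cone2 ![0,1] ![-1,-2], cone2 ![-1,-2] ![1,0]} : Set (Set (Fin 2 → ℝ))), proj ![1,0,0] ∈ C ∧ proj ![0,-1,-1] ∈ C ∧ proj ![-1,-2,-1] ∈ C) ∧
    (∃ C ∈ ({cone2 ![1,0] ![1,1], cone2 ![1,1] ![0,1], cone2 ![0,1] ![-1,-2], cone2 ![-1,-2] ![1,0]} : Set (Set (Fin 2 → ℝ))), proj ![1,0,0] ∈ C ∧ proj ![0,-1,0] ∈ C ∧ proj ![-1,-2,-1] ∈ C) ∧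
    (∃ C ∈ ({cone2 ![1,0] ![1,1], cone2 ![1,1] ![0,1], cone2 ![0,1] ![-1,-2], cone2 ![-1,-2] ![1,0]} : Set (Set (Fin 2 → ℝ))), proj ![0,-1,0] ∈ C ∧ proj ![0,0,1] ∈ C ∧ proj ![-1,-2,-1] ∈ C) ∧
    (∃ C ∈ ({cone2 ![1,0] ![1,1], cone2 ![1,1] ![0,1], cone2 ![0,1] ![-1,-2], cone2 ![-1,-2] ![1,0]} : Set (Set (Fin 2 → ℝ))), proj ![0,0,-1] ∈ C ∧ proj ![0,-1,-1] ∈ C ∧ proj ![-1,-2,-1] ∈ C) ∧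
    (∃ C ∈ ({cone2 ![1,0] ![1,1], cone2 ![1,1] ![0,1], cone2 ![0,1] ![-1,-2], cone2 ![-1,-2] ![1,0]} : Set (Set (Fin 2 → ℝ))), proj ![0,0,1] ∈ C ∧ proj ![1,1,(a:ℝ)] ∈ C ∧ proj ![0,1,(b:ℝ)] ∈ C) ∧
    (∃ C ∈ ({cone2 ![1,0] ![1,1], cone2 ![1,1] ![0,1], cone2 ![0,1] ![-1,-2], cone2 ![-1,-2] ![1,0]} : Set (Set (Fin 2 → ℝ))), proj ![1,1,(a:ℝ)] ∈ C ∧ proj ![0,0,-1] ∈ C ∧ proj ![0,1,(b:ℝ)] ∈ C) ∧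
    (∃ C ∈ ({cone2 ![1,0] ![1,1], cone2 ![1,1] ![0,1], cone2 ![0,1] ![-1,-2], cone2 ![-1,-2] ![1,0]} : Set (Set (Fin 2 → ℝ))), proj ![0,0,-1] ∈ C ∧ proj ![-1,-2,-1] ∈ C ∧ proj ![0,1,(b:ℝ)] ∈ C) ∧
    (∃ C ∈ ({cone2 ![1,0] ![1,1], cone2 ![1,1] ![0,1], cone2 ![0,1] ![-1,-2], cone2 ![-1,-2] ![1,0]} : Set (Set (Fin 2 → ℝ))), proj ![0,0,1] ∈ C ∧ proj ![-1,-2,-1] ∈ C ∧ proj ![0,1,(b:ℝ)] ∈ C) := by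
  refine ⟨⟨_, by simp, p10C4, p0m1C4, zC4⟩,
    ⟨_, by simp, p10C1, zC1, p11C1 a⟩,
    ⟨_, by simp, p10C1, p11C1 a, zC1'⟩,
    ⟨_, by simp, p10C4, zC4', p66C4⟩,
    ⟨_, by simp, p10C4, p66C4, p7C4⟩,
    ⟨_, by simp, p10C4, p0m1C4, p7C4⟩,
    ⟨_, by simp, p0m1C4, zC4, p7C4⟩,
    ⟨_, by simp, zC4', p66C4, p7C4⟩,
    ⟨_, by simp, zC2, p11C2 a, p8C2 b⟩,
    ⟨_, by simp, p11C2 a, zC2', p8C2 b⟩,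
    ⟨_, by simp, zC3', p7C3, p8C3 b⟩,
    ⟨_, by simp, zC3, p7C3, p8C3 b⟩⟩
end
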